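/- arXiv:2105.07669 — 7 statements merged into one kernel-verified Lean document; each statement's English description precedes it below -/
import Mathlib

section
/- For any line network of length L formed by DMCs Q_1,…,Q_L and any batch size M, batch alphabet 𝒜 and inner block-length N, the batched-code capacity C_L(M,N) = (1/N)·max over recoding transition matrices F,{Φ_ℓ} and input distributions p_X of I(p_X, W_L) is attained by deterministic recoding, i.e., there exist 0–1 (deterministic) transition matrices F and Φ_1,…,Φ_{L−1} achieving the maximum. -/
open scoped BigOperators

def IsDist {α : Type*} [Fintype α] (p : α → ℝ) : Prop :=
  (∀ x, 0 ≤ p x) ∧ ∑ x, p x = 1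

def IsStoch {α β : Type*} [Fintype α] [Fintype β] (W : Matrix α β ℝ) : Prop :=
  ∀ x, (∀ y, 0 ≤ W x y) ∧ ∑ y, W x y = 1

/-- Mutual information `I(p, W)` (base-2 logarithm) between the input of channel `W`,
distributed according to `p`, and the corresponding output. -/
noncomputable def mutualInfo {α β : Type*} [Fintype α] [Fintype β]
    (p : α → ℝ) (W : Matrix α β ℝ) : ℝ :=
  ∑ x, ∑ y, p x * W x y * Real.logb 2 (W x y / ∑ x', p x' * W x' y)

/-- `N`-fold memoryless extension `Q^{⊗N}` of a channel. -/
noncomputable def tensorPow {α β : Type*} [Fintype α] [Fintype β] (N : ℕ)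
    (Q : Matrix α β ℝ) : Matrix (Fin N → α) (Fin N → β) ℝ :=
  Matrix.of fun u y => ∏ i, Q (u i) (y i)

/-- `chain Q Φ n = Q 0 * Φ 0 * Q 1 * Φ 1 * ⋯ * Q n`. -/
noncomputable def chain {β γ : Type*} [Fintype β] [Fintype γ]
    (Q : ℕ → Matrix β γ ℝ) (Φ : ℕ → Matrix γ β ℝ) : ℕ → Matrix β γ ℝ
  | 0 => Q 0
  | (n+1) => chain Q Φ n * Φ n * Q (n+1)

/-- End-to-end transition matrix `W_L = F Q₁^{⊗N} Φ₁ Q₂^{⊗N} ⋯ Φ_{L-1} Q_L^{⊗N}` of a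
batched code with batch alphabet `A`, batch size `M`, inner block-length `N`,
over the line network of length `L` whose `ℓ`-th link is the DMC `Q (ℓ-1)` (0-indexed). -/
noncomputable def endToEnd {A Qi Qo : Type*} [Fintype A] [Fintype Qi] [Fintype Qo]
    (L M N : ℕ)
    (F : Matrix (Fin M → A) (Fin N → Qi) ℝ)
    (Q : ℕ → Matrix Qi Qo ℝ)
    (Φ : ℕ → Matrix (Fin N → Qo) (Fin N → Qi) ℝ) :
    Matrix (Fin M → A) (Fin N → Qo) ℝ :=
  F * chain (fun ℓ => tensorPow N (Q ℓ)) Φ (L - 1)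

/-- Shannon capacity of a DMC, as the supremum of mutual information over input
distributions. -/
noncomputable def capacity {α β : Type*} [Fintype α] [Fintype β] (W : Matrix α β ℝ) : ℝ :=
  sSup {I : ℝ | ∃ p : α → ℝ, IsDist p ∧ I = mutualInfo p W}

/-!
`I(p, W)` is convex in `W` (log-sum inequality), and `W_L` is affine in each of
`F, Φ₁, …, Φ_{L-1}` separately. A stochastic matrix is a convex combination of the 0–1 matrices
of functions (with product weights), so by the maximum principle for convex functions each
recoding matrix in turn can be replaced by a deterministic one without decreasing `I(p, W_L)`.
There are finitely many deterministic codes, and for each of them `I(·, W_L)` attains its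
maximum on the compact simplex of input distributions.
-/

open Real Finset

theorem convexOn_mul_logb : ConvexOn ℝ (Set.Ici 0) fun x : ℝ => x * logb 2 x := by
  have h : (fun x : ℝ => x * logb 2 x) = fun x => (log 2)⁻¹ • (x * log x) := by
    ext x
    rw [logb, smul_eq_mul]
    ring
  exact h ▸ convexOn_mul_log.smul (inv_nonneg.2 (log_nonneg one_le_two))

theorem log_sum_inequality {ι : Type*} (s : Finset ι) (a b : ι → ℝ)
    (ha : ∀ i ∈ s, 0 ≤ a i) (hb : ∀ i ∈ s, 0 ≤ b i) (hab : ∀ i ∈ s, b i = 0 → a i = 0) :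
    (∑ i ∈ s, a i) * logb 2 ((∑ i ∈ s, a i) / ∑ i ∈ s, b i)
      ≤ ∑ i ∈ s, a i * logb 2 (a i / b i) := by
  rcases (sum_nonneg hb).eq_or_lt with hB | hB
  · have ha0 : ∀ i ∈ s, a i = 0 := fun i hi =>
      hab i hi ((sum_eq_zero_iff_of_nonneg hb).1 hB.symm i hi)
    rw [sum_eq_zero ha0, zero_mul]
    exact (sum_eq_zero fun i hi => by rw [ha0 i hi, zero_mul]).ge
  set B := ∑ i ∈ s, b i
  have hw : ∀ i ∈ s, b i / B * (a i / b i) = a i / B := fun i hi => by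
    by_cases hbi : b i = 0
    · simp [hbi, hab i hi hbi]
    · field_simp
  -- Jensen for `x ↦ x logb x` with weights `b i / B` at the points `a i / b i`
  have hJensen := convexOn_mul_logb.map_sum_le (t := s) (w := fun i => b i / B)
    (p := fun i => a i / b i) (fun i hi => div_nonneg (hb i hi) hB.le)
    (by rw [← sum_div, div_self hB.ne']) (fun i hi => div_nonneg (ha i hi) (hb i hi))
  simp only [smul_eq_mul, ← mul_assoc, sum_congr rfl hw, ← sum_div] at hJensen
  calc (∑ i ∈ s, a i) * logb 2 ((∑ i ∈ s, a i) / B)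
      = B * ((∑ i ∈ s, a i) / B * logb 2 ((∑ i ∈ s, a i) / B)) := by field_simp
    _ ≤ B * ∑ i ∈ s, b i / B * (a i / b i) * logb 2 (a i / b i) := by gcongr
    _ = ∑ i ∈ s, a i * logb 2 (a i / b i) := by
      rw [mul_sum]
      refine sum_congr rfl fun i hi => ?_
      rw [hw i hi]
      field_simp

theorem mul_logb_mul_div_mul (c w t : ℝ) :
    c * w * logb 2 (c * w / (c * t)) = c * (w * logb 2 (w / t)) := by
  rcases eq_or_ne c 0 with rfl | hc
  · simp
  · rw [mul_div_mul_left _ _ hc, mul_assoc]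

theorem convex_setOf_matrix_nonneg {α β : Type*} :
    Convex ℝ {W : Matrix α β ℝ | ∀ x y, 0 ≤ W x y} :=
  fun _ hW₁ _ hW₂ _ _ ha hb _ x y =>
    add_nonneg (mul_nonneg ha (hW₁ x y)) (mul_nonneg hb (hW₂ x y))

theorem convexOn_mutualInfo {α β : Type*} [Fintype α] [Fintype β] {p : α → ℝ}
    (hp : ∀ x, 0 ≤ p x) : ConvexOn ℝ {W : Matrix α β ℝ | ∀ x y, 0 ≤ W x y} (mutualInfo p) := by
  refine ⟨convex_setOf_matrix_nonneg, fun W₁ hW₁ W₂ hW₂ a b ha hb _ => ?_⟩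
  simp only [mutualInfo, smul_eq_mul, mul_sum, ← sum_add_distrib]
  refine sum_le_sum fun x _ => sum_le_sum fun y _ => ?_
  rcases (hp x).eq_or_lt with hpx | hpx
  · simp [← hpx]
  have hsupp : ∀ W : Matrix α β ℝ, (∀ x y, 0 ≤ W x y) → ∀ c : ℝ,
      c * ∑ x', p x' * W x' y = 0 → c * W x y = 0 := by
    intro W hW c h
    rcases mul_eq_zero.1 h with hc | ht
    · rw [hc, zero_mul]
    have := (sum_eq_zero_iff_of_nonneg fun x' _ => mul_nonneg (hp x') (hW x' y)).1 ht x
      (mem_univ x)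
    rw [(mul_eq_zero.1 this).resolve_left hpx.ne', mul_zero]
  have hnonneg : ∀ W : Matrix α β ℝ, (∀ x y, 0 ≤ W x y) → 0 ≤ ∑ x', p x' * W x' y :=
    fun W hW => sum_nonneg fun x' _ => mul_nonneg (hp x') (hW x' y)
  have hin : ∀ (c : ℝ) (W : Matrix α β ℝ),
      ∑ x', p x' * (c * W x' y) = c * ∑ x', p x' * W x' y := fun c W => by
    rw [mul_sum]
    exact sum_congr rfl fun _ _ => mul_left_comm _ _ _
  have hsum := log_sum_inequality univ ![a * W₁ x y, b * W₂ x y]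
    ![a * ∑ x', p x' * W₁ x' y, b * ∑ x', p x' * W₂ x' y]
    (by simp [Fin.forall_fin_two, mul_nonneg ha (hW₁ x y), mul_nonneg hb (hW₂ x y)])
    (by simp [Fin.forall_fin_two, mul_nonneg ha (hnonneg W₁ hW₁),
      mul_nonneg hb (hnonneg W₂ hW₂)])
    (by simpa only [Fin.forall_fin_two, mem_univ, forall_const]
      using ⟨hsupp W₁ hW₁ a, hsupp W₂ hW₂ b⟩)
  simp only [Fin.sum_univ_two, Matrix.cons_val_zero, Matrix.cons_val_one,
    mul_logb_mul_div_mul] at hsum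
  simp only [Matrix.add_apply, Matrix.smul_apply, smul_eq_mul, sum_add_distrib, mul_add, hin]
  linarith [mul_le_mul_of_nonneg_left hsum hpx.le]

open Classical in
noncomputable def funMatrix {α β : Type*} (f : α → β) : Matrix α β ℝ :=
  Matrix.of fun x y => if y = f x then 1 else 0

theorem funMatrix_eq_zero_or_one {α β : Type*} (f : α → β) (x : α) (y : β) :
    funMatrix f x y = 0 ∨ funMatrix f x y = 1 := by
  rw [funMatrix, Matrix.of_apply]
  split_ifs <;> simp

section Stochastic

variable {α β : Type*} [Fintype α] [Fintype β]

theorem IsStoch.nonneg {W : Matrix α β ℝ} (hW : IsStoch W) (x : α) (y : β) : 0 ≤ W x y :=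
  (hW x).1 y

theorem isStoch_funMatrix (f : α → β) : IsStoch (funMatrix f) := by
  classical
  refine fun x => ⟨fun y => ?_, ?_⟩
  · rcases funMatrix_eq_zero_or_one f x y with h | h <;> simp [h]
  · simp [funMatrix]

theorem IsStoch.sum_prod_smul_funMatrix [DecidableEq α] {W : Matrix α β ℝ} (hW : IsStoch W) :
    ∑ f : α → β, (∏ x, W x (f x)) • funMatrix f = W := by
  classical
  ext x₀ y₀
  -- expanding `∏ x, ∑ y, V x y = W x₀ y₀` sums the weights of exactly those `f` with `f x₀ = y₀`
  let V : Matrix α β ℝ := fun x y => if x = x₀ then (if y = y₀ then W x y else 0) else W x y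
  have hV : ∀ x, ∑ y, V x y = if x = x₀ then W x₀ y₀ else 1 := fun x => by
    by_cases hx : x = x₀
    · subst hx
      simp [V]
    · simpa [V, hx] using (hW x).2
  have hprod : ∀ f : α → β, ∏ x, V x (f x) = if y₀ = f x₀ then ∏ x, W x (f x) else 0 := by
    intro f
    split_ifs with hf
    · exact prod_congr rfl fun x _ => by by_cases hx : x = x₀ <;> simp [V, hx, hf]
    · exact prod_eq_zero (mem_univ x₀) (by simp [V, Ne.symm hf])
  calc (∑ f : α → β, (∏ x, W x (f x)) • funMatrix f) x₀ y₀
      = ∑ f : α → β, ∏ x, V x (f x) := by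
        simp [Matrix.sum_apply, funMatrix, hprod]
    _ = W x₀ y₀ := by
        rw [← Fintype.prod_sum fun x y => V x y]
        simp [hV]

theorem IsStoch.mem_convexHull_range_funMatrix {W : Matrix α β ℝ} (hW : IsStoch W) :
    W ∈ convexHull ℝ (Set.range (funMatrix : (α → β) → Matrix α β ℝ)) := by
  classical
  rw [← hW.sum_prod_smul_funMatrix]
  refine (convex_convexHull ℝ _).sum_mem (fun f _ => prod_nonneg fun x _ => hW.nonneg x (f x))
    ?_ fun f _ => subset_convexHull ℝ _ (Set.mem_range_self f)
  rw [← Fintype.prod_sum fun x y => W x y]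
  exact prod_eq_one fun x _ => (hW x).2

end Stochastic

theorem Matrix.mul_apply_nonneg {α β γ : Type*} [Fintype β] {A : Matrix α β ℝ}
    {B : Matrix β γ ℝ} (hA : ∀ x y, 0 ≤ A x y) (hB : ∀ x y, 0 ≤ B x y) (x : α) (z : γ) :
    0 ≤ (A * B) x z :=
  sum_nonneg fun y _ => mul_nonneg (hA x y) (hB y z)

theorem IsStoch.exists_mutualInfo_mul_mul_le {α γ δ ε : Type*} [Fintype α] [Fintype γ]
    [Fintype δ] [Fintype ε] {p : α → ℝ} (hp : ∀ x, 0 ≤ p x) {A : Matrix α γ ℝ}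
    (hA : ∀ x y, 0 ≤ A x y) {W : Matrix γ δ ℝ} (hW : IsStoch W) {B : Matrix δ ε ℝ}
    (hB : ∀ x y, 0 ≤ B x y) :
    ∃ f : γ → δ, mutualInfo p (A * W * B) ≤ mutualInfo p (A * funMatrix f * B) := by
  have hlin : IsLinearMap ℝ fun X : Matrix γ δ ℝ => A * X * B :=
    ⟨fun X Y => by rw [Matrix.mul_add, Matrix.add_mul],
      fun c X => by rw [Matrix.mul_smul, Matrix.smul_mul]⟩
  have hmem := hlin.image_convexHull _ ▸
    Set.mem_image_of_mem (fun X => A * X * B) hW.mem_convexHull_range_funMatrix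
  obtain ⟨_, ⟨_, ⟨f, rfl⟩, rfl⟩, hf⟩ :=
    (convexOn_mutualInfo hp).exists_ge_of_mem_convexHull (by
      rintro _ ⟨_, ⟨f, rfl⟩, rfl⟩
      exact Matrix.mul_apply_nonneg
        (Matrix.mul_apply_nonneg hA (isStoch_funMatrix f).nonneg) hB) hmem
  exact ⟨f, hf⟩

section Capacity

variable {α β : Type*} [Fintype α] [Fintype β]

-- `I(p, W) = H(Y) - H(Y | X)`: unlike the defining formula, this is visibly continuous in `p`
theorem mutualInfo_eq_of_nonneg {p : α → ℝ} {W : Matrix α β ℝ} (hp : ∀ x, 0 ≤ p x)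
    (hW : ∀ x y, 0 ≤ W x y) :
    mutualInfo p W = (∑ x, p x * ∑ y, W x y * log (W x y)
      - ∑ y, (∑ x, p x * W x y) * log (∑ x, p x * W x y)) / log 2 := by
  have key : ∀ x y, p x * W x y * logb 2 (W x y / ∑ x', p x' * W x' y)
      = (p x * (W x y * log (W x y)) - p x * W x y * log (∑ x', p x' * W x' y)) / log 2 := by
    intro x y
    by_cases hW0 : W x y = 0
    · simp [hW0]
    by_cases ht : ∑ x', p x' * W x' y = 0
    · have hpx : p x * W x y = 0 := (sum_eq_zero_iff_of_nonneg fun x' _ =>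
        mul_nonneg (hp x') (hW x' y)).1 ht x (mem_univ x)
      simp [(mul_eq_zero.1 hpx).resolve_right hW0]
    · rw [logb, log_div hW0 ht]
      ring
  simp only [mutualInfo, key, ← sum_div, sum_sub_distrib, mul_sum]
  congr 2
  rw [sum_comm]
  exact sum_congr rfl fun y _ => by rw [sum_mul]

theorem exists_isMaxOn_mutualInfo [Nonempty α] {W : Matrix α β ℝ} (hW : ∀ x y, 0 ≤ W x y) :
    ∃ p ∈ stdSimplex ℝ α, IsMaxOn (mutualInfo · W) (stdSimplex ℝ α) p := by
  classical
  refine (isCompact_stdSimplex ℝ α).exists_isMaxOn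
    ⟨_, ite_eq_mem_stdSimplex ℝ (Classical.arbitrary α)⟩ ?_
  refine ContinuousOn.congr (Continuous.continuousOn ?_)
    fun p hp => mutualInfo_eq_of_nonneg hp.1 hW
  have hmul_log := continuous_mul_log
  fun_prop

theorem exists_max_mutualInfo_of_finite {ι : Type*} [Finite ι] [Nonempty ι] [Nonempty α]
    (W : ι → Matrix α β ℝ) (hW : ∀ i x y, 0 ≤ W i x y) :
    ∃ i p, IsDist p ∧ ∀ j q, IsDist q → mutualInfo q (W j) ≤ mutualInfo p (W i) := by
  choose p hp hmax using fun i => exists_isMaxOn_mutualInfo (hW i)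
  obtain ⟨i, hi⟩ := Finite.exists_max fun i => mutualInfo (p i) (W i)
  exact ⟨i, p i, hp i, fun j q hq => (isMaxOn_iff.1 (hmax j) q hq).trans (hi j)⟩

end Capacity

section Chain

variable {β γ : Type*} [Fintype β] [Fintype γ] {Q : ℕ → Matrix β γ ℝ}

theorem chain_congr {Φ Ψ : ℕ → Matrix γ β ℝ} {n : ℕ} (h : ∀ ℓ < n, Φ ℓ = Ψ ℓ) :
    chain Q Φ n = chain Q Ψ n := by
  induction n with
  | zero => rfl
  | succ n ih =>
    rw [chain, chain, ih fun ℓ hℓ => h ℓ (by omega), h n n.lt_succ_self]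

theorem chain_add_succ (Φ : ℕ → Matrix γ β ℝ) (k m : ℕ) :
    chain Q Φ (k + 1 + m)
      = chain Q Φ k * Φ k * chain (fun ℓ => Q (k + 1 + ℓ)) (fun ℓ => Φ (k + 1 + ℓ)) m := by
  induction m with
  | zero => rfl
  | succ m ih =>
    rw [← add_assoc, chain, ih, chain]
    simp only [Matrix.mul_assoc, add_assoc]

theorem chain_nonneg (hQ : ∀ ℓ x y, 0 ≤ Q ℓ x y) {Φ : ℕ → Matrix γ β ℝ}
    (hΦ : ∀ ℓ x y, 0 ≤ Φ ℓ x y) (n : ℕ) (x : β) (y : γ) : 0 ≤ chain Q Φ n x y := by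
  induction n generalizing x y with
  | zero => exact hQ 0 x y
  | succ n ih => exact Matrix.mul_apply_nonneg (Matrix.mul_apply_nonneg ih (hΦ n)) (hQ _) x y

variable {α : Type*} [Fintype α] {p : α → ℝ} {F : Matrix α β ℝ}

theorem exists_mutualInfo_chain_update_funMatrix_ge (hp : ∀ x, 0 ≤ p x)
    (hF : ∀ x y, 0 ≤ F x y) (hQ : ∀ ℓ x y, 0 ≤ Q ℓ x y) {Φ : ℕ → Matrix γ β ℝ}
    (hΦ : ∀ ℓ x y, 0 ≤ Φ ℓ x y) {k n : ℕ} (hk : k < n) (hΦk : IsStoch (Φ k)) :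
    ∃ g : γ → β, mutualInfo p (F * chain Q Φ n)
      ≤ mutualInfo p (F * chain Q (Function.update Φ k (funMatrix g)) n) := by
  obtain ⟨m, rfl⟩ : ∃ m, n = k + 1 + m := ⟨n - (k + 1), by omega⟩
  have hpre (X : Matrix γ β ℝ) : chain Q (Function.update Φ k X) k = chain Q Φ k :=
    chain_congr fun ℓ hℓ => Function.update_of_ne hℓ.ne _ _
  have hsuf (X : Matrix γ β ℝ) :
      (fun ℓ => Function.update Φ k X (k + 1 + ℓ)) = fun ℓ => Φ (k + 1 + ℓ) :=
    funext fun ℓ => Function.update_of_ne (by omega) _ _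
  simp only [chain_add_succ, hpre, hsuf, Function.update_self, ← Matrix.mul_assoc]
  exact hΦk.exists_mutualInfo_mul_mul_le hp (Matrix.mul_apply_nonneg hF (chain_nonneg hQ hΦ k))
    (chain_nonneg (fun _ => hQ _) (fun _ => hΦ _) m)

theorem exists_mutualInfo_chain_funMatrix_ge [Nonempty β] (hp : ∀ x, 0 ≤ p x)
    (hF : ∀ x y, 0 ≤ F x y) (hQ : ∀ ℓ x y, 0 ≤ Q ℓ x y) {Φ : ℕ → Matrix γ β ℝ}
    (hΦ : ∀ ℓ, IsStoch (Φ ℓ)) (n : ℕ) :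
    ∃ g : ℕ → γ → β, mutualInfo p (F * chain Q Φ n)
      ≤ mutualInfo p (F * chain Q (fun ℓ => funMatrix (g ℓ)) n) := by
  suffices ∀ k ≤ n, ∃ g : ℕ → γ → β, mutualInfo p (F * chain Q Φ n)
      ≤ mutualInfo p (F * chain Q (fun ℓ => if ℓ < k then funMatrix (g ℓ) else Φ ℓ) n) by
    obtain ⟨g, hg⟩ := this n le_rfl
    exact ⟨g, hg.trans_eq (by rw [chain_congr fun ℓ hℓ => if_pos hℓ])⟩
  intro k hk
  induction k with
  | zero => exact ⟨fun _ _ => Classical.arbitrary β, by simp⟩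
  | succ k ih =>
    obtain ⟨g, hg⟩ := ih (by omega)
    obtain ⟨g₀, hg₀⟩ := exists_mutualInfo_chain_update_funMatrix_ge hp hF hQ
      (Φ := fun ℓ => if ℓ < k then funMatrix (g ℓ) else Φ ℓ)
      (fun ℓ => by split_ifs; exacts [(isStoch_funMatrix _).nonneg, (hΦ ℓ).nonneg])
      hk (by simpa using hΦ k)
    refine ⟨Function.update g k g₀, hg.trans (hg₀.trans_eq ?_)⟩
    congr 3
    ext1 ℓ
    rcases lt_trichotomy ℓ k with h | rfl | h
    · simp [h, h.ne, Nat.lt_succ_of_lt h]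
    · simp
    · simp [h.ne', h.not_gt, show ¬ ℓ < k + 1 by omega]

end Chain

section LineNetwork

variable {A Qi Qo : Type*} [Fintype A] [Fintype Qi] [Fintype Qo]

theorem tensorPow_nonneg {Q : Matrix Qi Qo ℝ} (hQ : ∀ x y, 0 ≤ Q x y) (N : ℕ)
    (u : Fin N → Qi) (y : Fin N → Qo) : 0 ≤ tensorPow N Q u y :=
  show 0 ≤ ∏ i, Q (u i) (y i) from prod_nonneg fun i _ => hQ (u i) (y i)

theorem endToEnd_nonneg (L M N : ℕ) {F : Matrix (Fin M → A) (Fin N → Qi) ℝ}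
    (hF : ∀ x u, 0 ≤ F x u) {Q : ℕ → Matrix Qi Qo ℝ} (hQ : ∀ ℓ x y, 0 ≤ Q ℓ x y)
    {Φ : ℕ → Matrix (Fin N → Qo) (Fin N → Qi) ℝ} (hΦ : ∀ ℓ y u, 0 ≤ Φ ℓ y u) :
    ∀ x y, 0 ≤ endToEnd L M N F Q Φ x y :=
  Matrix.mul_apply_nonneg hF (chain_nonneg (fun ℓ => tensorPow_nonneg (hQ ℓ) N) hΦ _)

theorem exists_mutualInfo_endToEnd_funMatrix_ge [Nonempty Qi] (L M N : ℕ)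
    {p : (Fin M → A) → ℝ} (hp : ∀ x, 0 ≤ p x) {F : Matrix (Fin M → A) (Fin N → Qi) ℝ}
    (hF : IsStoch F) {Q : ℕ → Matrix Qi Qo ℝ} (hQ : ∀ ℓ x y, 0 ≤ Q ℓ x y)
    {Φ : ℕ → Matrix (Fin N → Qo) (Fin N → Qi) ℝ} (hΦ : ∀ ℓ, IsStoch (Φ ℓ)) :
    ∃ (f : (Fin M → A) → Fin N → Qi) (g : ℕ → (Fin N → Qo) → Fin N → Qi),
      mutualInfo p (endToEnd L M N F Q Φ)
        ≤ mutualInfo p (endToEnd L M N (funMatrix f) Q fun ℓ => funMatrix (g ℓ)) := by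
  classical
  have hQN : ∀ ℓ u y, 0 ≤ tensorPow N (Q ℓ) u y := fun ℓ => tensorPow_nonneg (hQ ℓ) N
  obtain ⟨f, hf⟩ := hF.exists_mutualInfo_mul_mul_le hp (A := 1)
    (fun x x' => by rw [Matrix.one_apply]; split_ifs <;> norm_num)
    (chain_nonneg hQN (fun ℓ => (hΦ ℓ).nonneg) (L - 1))
  obtain ⟨g, hg⟩ := exists_mutualInfo_chain_funMatrix_ge hp (isStoch_funMatrix f).nonneg hQN hΦ
    (L - 1)
  rw [Matrix.one_mul, Matrix.one_mul] at hf
  exact ⟨f, g, hf.trans hg⟩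

end LineNetwork

theorem stmt0_general {A Qi Qo : Type} [Fintype A] [Fintype Qi] [Fintype Qo]
    [Nonempty A] [Nonempty Qi]
    (L M N : ℕ)
    (Q : ℕ → Matrix Qi Qo ℝ) (hQ : ∀ ℓ, IsStoch (Q ℓ)) :
    ∃ (F : Matrix (Fin M → A) (Fin N → Qi) ℝ)
      (Φ : ℕ → Matrix (Fin N → Qo) (Fin N → Qi) ℝ)
      (p : (Fin M → A) → ℝ),
      IsStoch F ∧ (∀ ℓ, IsStoch (Φ ℓ)) ∧ IsDist p ∧
      (∀ x u, F x u = 0 ∨ F x u = 1) ∧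
      (∀ ℓ y u, Φ ℓ y u = 0 ∨ Φ ℓ y u = 1) ∧
      (∀ (F' : Matrix (Fin M → A) (Fin N → Qi) ℝ)
         (Φ' : ℕ → Matrix (Fin N → Qo) (Fin N → Qi) ℝ)
         (p' : (Fin M → A) → ℝ),
         IsStoch F' → (∀ ℓ, IsStoch (Φ' ℓ)) → IsDist p' →
         (1 / (N : ℝ)) * mutualInfo p' (endToEnd L M N F' Q Φ')
           ≤ (1 / (N : ℝ)) * mutualInfo p (endToEnd L M N F Q Φ)) := by
  classical
  have hQ_nonneg : ∀ ℓ x y, 0 ≤ Q ℓ x y := fun ℓ => (hQ ℓ).nonneg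
  -- only `Φ 0, …, Φ (L - 2)` enter `W_L`, so the deterministic codes form a finite family
  let recoder (g : Fin (L - 1) → (Fin N → Qo) → Fin N → Qi) (ℓ : ℕ) :
      (Fin N → Qo) → Fin N → Qi :=
    if h : ℓ < L - 1 then g ⟨ℓ, h⟩ else fun _ => Classical.arbitrary _
  let W (c : ((Fin M → A) → Fin N → Qi) × (Fin (L - 1) → (Fin N → Qo) → Fin N → Qi)) :=
    endToEnd L M N (funMatrix c.1) Q fun ℓ => funMatrix (recoder c.2 ℓ)
  obtain ⟨c, p, hp, hmax⟩ := exists_max_mutualInfo_of_finite W fun c =>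
    endToEnd_nonneg L M N (isStoch_funMatrix _).nonneg hQ_nonneg fun _ =>
      (isStoch_funMatrix _).nonneg
  refine ⟨funMatrix c.1, fun ℓ => funMatrix (recoder c.2 ℓ), p, isStoch_funMatrix _,
    fun ℓ => isStoch_funMatrix _, hp, funMatrix_eq_zero_or_one _,
    fun ℓ => funMatrix_eq_zero_or_one _, fun F' Φ' p' hF' hΦ' hp' => ?_⟩
  obtain ⟨f, g, hfg⟩ := exists_mutualInfo_endToEnd_funMatrix_ge L M N hp'.1 hF' hQ_nonneg hΦ'
  have hW : endToEnd L M N (funMatrix f) Q (fun ℓ => funMatrix (g ℓ)) = W (f, fun i => g i) :=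
    congrArg (funMatrix f * ·) (chain_congr fun ℓ hℓ => by simp [recoder, hℓ])
  gcongr
  exact hfg.trans (hW ▸ hmax _ p' hp')

/-- For any line network of length `L` formed by DMCs `Q₁,…,Q_L` and any
batch size `M`, batch alphabet `A`, and inner block-length `N`, the batched-code capacity
`C_L(M,N) = (1/N) max_{F,Φ,p} I(p, W_L)` is attained by deterministic (0–1) recoding
matrices `F` and `Φ₁,…,Φ_{L-1}`. -/
theorem stmt0 {A Qi Qo : Type} [Fintype A] [Fintype Qi] [Fintype Qo]
    [Nonempty A] [Nonempty Qi] [Nonempty Qo]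
    (L M N : ℕ) (hL : 0 < L) (hM : 0 < M) (hN : 0 < N)
    (Q : ℕ → Matrix Qi Qo ℝ) (hQ : ∀ ℓ, IsStoch (Q ℓ)) :
    ∃ (F : Matrix (Fin M → A) (Fin N → Qi) ℝ)
      (Φ : ℕ → Matrix (Fin N → Qo) (Fin N → Qi) ℝ)
      (p : (Fin M → A) → ℝ),
      IsStoch F ∧ (∀ ℓ, IsStoch (Φ ℓ)) ∧ IsDist p ∧
      (∀ x u, F x u = 0 ∨ F x u = 1) ∧
      (∀ ℓ y u, Φ ℓ y u = 0 ∨ Φ ℓ y u = 1) ∧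
      (∀ (F' : Matrix (Fin M → A) (Fin N → Qi) ℝ)
         (Φ' : ℕ → Matrix (Fin N → Qo) (Fin N → Qi) ℝ)
         (p' : (Fin M → A) → ℝ),
         IsStoch F' → (∀ ℓ, IsStoch (Φ' ℓ)) → IsDist p' →
         (1 / (N : ℝ)) * mutualInfo p' (endToEnd L M N F' Q Φ')
           ≤ (1 / (N : ℝ)) * mutualInfo p (endToEnd L M N F Q Φ)) :=
  stmt0_general L M N Q hQ
end

section
/- Fix a real number ε with 0<ε<1, and for integer L>1 consider the function F(N) = (1−ε^N)^L / N over positive integers N. Then the maximizing N is Θ(ln L) and the maximum value max_N F(N) is Θ(ln(1/ε) / ln L) as L→∞; in particular there are positive constants c_1, c_2, c_3, c_4 (depending only on ε) such that for all sufficiently large L, some N with c_1 ln L ≤ N ≤ c_2 ln L attains the maximum and c_3 ln(1/ε)/ln L ≤ max_N F(N) ≤ c_4 ln(1/ε)/ln L. -/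
/-!
Write `a = log (1/ε)`, `ℓ = log L` and `F N = (1 - ε^N)^L / N ≤ 1/N`. For `m = ⌈log (2L) / a⌉`
Bernoulli's inequality gives `(1 - ε^m)^L ≥ 1/2`, so `F m ≥ 1/(2m) ≥ a/(6ℓ)`; as `F N ≤ 1/N`,
the supremum of `F` is attained, at some `N ≤ 6ℓ/a`. If `N < ℓ/(2a)` then `ε^N > L^(-1/2)`, so
`F N ≤ (1 - L^(-1/2))^L ≤ exp (-√L)`, which is `o(1/ℓ)`. Hence the maximizer has `N ≥ ℓ/(2a)`
and `F N ≤ 1/N ≤ 2a/ℓ`.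
-/

open Real Filter Topology

lemma exists_forall_le_of_le_one_div {f : ℕ → ℝ} (hf : ∀ n, 1 ≤ n → f n ≤ 1 / n) {m : ℕ}
    (hm : 1 ≤ m) (hfm : 0 < f m) : ∃ N, 1 ≤ N ∧ ∀ n, 1 ≤ n → f n ≤ f N := by
  set M := ⌈1 / f m⌉₊
  have hmM : m ≤ M := by
    have hm' : (m : ℝ) ≤ 1 / f m := (le_one_div (by positivity) hfm).2 (hf m hm)
    exact_mod_cast hm'.trans (Nat.le_ceil _)
  obtain ⟨N, hN, hmax⟩ := (Finset.Icc 1 M).exists_max_image f ⟨m, Finset.mem_Icc.2 ⟨hm, hmM⟩⟩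
  refine ⟨N, (Finset.mem_Icc.1 hN).1, fun n hn => ?_⟩
  rcases le_or_gt n M with hnM | hMn
  · exact hmax n (Finset.mem_Icc.2 ⟨hn, hnM⟩)
  have hn' : 1 / f m < n := Nat.lt_of_ceil_lt hMn
  calc f n ≤ 1 / n := hf n hn
    _ ≤ f m := by rw [div_le_comm₀ (by positivity) hfm]; exact hn'.le
    _ ≤ f N := hmax m (Finset.mem_Icc.2 ⟨hm, hmM⟩)

lemma half_le_one_sub_pow {x : ℝ} {L : ℕ} (hx1 : x ≤ 1) (hLx : 2 * L * x ≤ 1) :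
    1 / 2 ≤ (1 - x) ^ L := by
  have := one_add_mul_le_pow (a := -x) (by linarith) L
  rw [← sub_eq_add_neg] at this
  linarith

lemma one_sub_pow_le_exp_neg {x t : ℝ} {L : ℕ} (htL : t ≤ L) (htx : t / L ≤ x) (hx1 : x ≤ 1) :
    (1 - x) ^ L ≤ exp (-t) :=
  (pow_le_pow_left₀ (by linarith) (by linarith) L).trans (one_sub_div_pow_le_exp_neg htL)

lemma tendsto_log_mul_exp_neg_sqrt_atTop :
    Tendsto (fun x => log x * exp (-√x)) atTop (𝓝 0) := by
  have h := ((tendsto_pow_mul_exp_neg_atTop_nhds_zero 1).comp tendsto_sqrt_atTop).const_mul 2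
  rw [mul_zero] at h
  refine tendsto_of_tendsto_of_tendsto_of_le_of_le' tendsto_const_nhds h ?_ ?_
  · filter_upwards [eventually_ge_atTop 1] with x hx
    exact mul_nonneg (log_nonneg hx) (exp_pos _).le
  · filter_upwards [eventually_ge_atTop 0] with x hx
    have hlog : log x ≤ 2 * √x :=
      calc log x ≤ √x / (1 / 2) := by rw [sqrt_eq_rpow]; exact log_le_rpow_div hx one_half_pos
        _ = 2 * √x := by ring
    simp only [Function.comp_apply, pow_one, ← mul_assoc]
    exact mul_le_mul_of_nonneg_right hlog (exp_pos _).le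

lemma pow_eq_exp_neg_mul_log_one_div {ε : ℝ} (hε : 0 < ε) (n : ℕ) :
    ε ^ n = exp (-(n * log (1 / ε))) := by
  rw [one_div, log_inv, mul_neg, neg_neg, ← log_pow, exp_log (pow_pos hε n)]

lemma one_sub_pow_div_le_one_div {x : ℝ} (hx0 : 0 ≤ x) (hx1 : x ≤ 1) (L n : ℕ) :
    (1 - x) ^ L / n ≤ 1 / n :=
  div_le_div_of_nonneg_right (pow_le_one₀ (by linarith) (by linarith)) n.cast_nonneg

lemma exists_forall_one_sub_pow_div_le {ε : ℝ} (hε : 0 < ε) (hε1 : ε < 1) {L : ℕ} (hL : 2 ≤ L)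
    (hεL : log (1 / ε) ≤ log L) :
    ∃ N : ℕ, 1 ≤ N ∧ (∀ n : ℕ, 1 ≤ n → (1 - ε ^ n) ^ L / (n : ℝ) ≤ (1 - ε ^ N) ^ L / (N : ℝ)) ∧
      log (1 / ε) / (6 * log L) ≤ (1 - ε ^ N) ^ L / (N : ℝ) := by
  set a := log (1 / ε)
  set ℓ := log L
  have ha : 0 < a := log_pos (one_lt_one_div hε hε1)
  have hℓ : 0 < ℓ := ha.trans_le hεL
  have hL' : (2 : ℝ) ≤ L := by exact_mod_cast hL
  have hℓ2 : log 2 ≤ ℓ := log_le_log two_pos hL'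
  have h2L : log (2 * L) = log 2 + ℓ := log_mul two_ne_zero (by positivity)
  set m := ⌈log (2 * L) / a⌉₊
  have hm1 : 1 ≤ m := Nat.one_le_iff_ne_zero.2 <| (Nat.ceil_pos.2 <|
    div_pos (log_pos (by linarith)) ha).ne'
  have hm : (m : ℝ) ≤ 3 * ℓ / a := by
    have := Nat.ceil_lt_add_one (div_pos (log_pos (by linarith : (1 : ℝ) < 2 * L)) ha).le
    have hma : ((m : ℝ) - 1) * a < log (2 * L) := (lt_div_iff₀ ha).1 (by linarith)
    rw [le_div_iff₀ ha]
    nlinarith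
  have hεm : 2 * L * ε ^ m ≤ 1 := by
    have : ε ^ m ≤ ((2 : ℝ) * L)⁻¹ := by
      rw [pow_eq_exp_neg_mul_log_one_div hε, ← exp_log (by positivity : (0 : ℝ) < 2 * L),
        ← exp_neg, exp_le_exp, neg_le_neg_iff, ← div_le_iff₀ ha]
      exact Nat.le_ceil _
    calc 2 * L * ε ^ m ≤ 2 * L * ((2 : ℝ) * L)⁻¹ := by gcongr
      _ = 1 := mul_inv_cancel₀ (by positivity)
  have hhalf : 1 / 2 ≤ (1 - ε ^ m) ^ L := half_le_one_sub_pow (pow_le_one₀ hε.le hε1.le) hεm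
  have hFm : a / (6 * ℓ) ≤ (1 - ε ^ m) ^ L / (m : ℝ) :=
    calc a / (6 * ℓ) = (1 / 2) / (3 * ℓ / a) := by field_simp; ring
      _ ≤ (1 - ε ^ m) ^ L / (m : ℝ) :=
        div_le_div₀ (by linarith) hhalf (by exact_mod_cast hm1) hm
  obtain ⟨N, hN1, hmax⟩ := exists_forall_le_of_le_one_div (f := fun n ↦ (1 - ε ^ n) ^ L / (n : ℝ))
    (fun n _ => one_sub_pow_div_le_one_div (pow_nonneg hε.le n) (pow_le_one₀ hε.le hε1.le) L n)
    hm1 (hFm.trans_lt' (by positivity))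
  exact ⟨N, hN1, hmax, hFm.trans (hmax m hm1)⟩

lemma bounds_of_log_div_le_one_sub_pow_div {ε : ℝ} (hε : 0 < ε) (hε1 : ε < 1) {L N : ℕ}
    (hL : 2 ≤ L) (hN : 1 ≤ N)
    (hdecay : log L * exp (-√L) < log (1 / ε) / 6)
    (hFN : log (1 / ε) / (6 * log L) ≤ (1 - ε ^ N) ^ L / (N : ℝ)) :
    log L / (2 * log (1 / ε)) ≤ N ∧ (N : ℝ) ≤ 6 * log L / log (1 / ε) ∧
      (1 - ε ^ N) ^ L / (N : ℝ) ≤ 2 * log (1 / ε) / log L := by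
  set a := log (1 / ε)
  set ℓ := log L
  have ha : 0 < a := log_pos (one_lt_one_div hε hε1)
  have hL' : (2 : ℝ) ≤ L := by exact_mod_cast hL
  have hℓ : 0 < ℓ := log_pos (by linarith)
  have hlogε : log ε = -a := by simp only [a, one_div, log_inv, neg_neg]
  have hN' : (0 : ℝ) < N := by exact_mod_cast hN
  have hεN1 : ε ^ N ≤ 1 := pow_le_one₀ hε.le hε1.le
  have hFN_le : (1 - ε ^ N) ^ L / (N : ℝ) ≤ 1 / N :=
    one_sub_pow_div_le_one_div (pow_nonneg hε.le N) hεN1 L N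
  have hlower : ℓ / (2 * a) ≤ N := by
    by_contra! hsmall
    have hεN : √L / L ≤ ε ^ N := by
      rw [← log_le_log_iff (by positivity) (by positivity), log_div (by positivity) (by positivity),
        log_sqrt (by positivity), log_pow, hlogε]
      rw [lt_div_iff₀ (by positivity)] at hsmall
      linarith
    have hsqrt : √(L : ℝ) ≤ L := sqrt_le_self_iff.2 (Or.inr (by linarith))
    have : a / (6 * ℓ) ≤ exp (-√L) :=
      hFN.trans ((div_le_self (pow_nonneg (sub_nonneg.2 hεN1) L) (by exact_mod_cast hN)).trans
        (one_sub_pow_le_exp_neg hsqrt hεN hεN1))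
    rw [div_le_iff₀ (by positivity)] at this
    linarith
  refine ⟨hlower, ?_, hFN_le.trans ?_⟩
  · rw [le_div_iff₀ ha]
    have := (hFN.trans hFN_le)
    rw [div_le_div_iff₀ (by positivity) hN'] at this
    linarith
  · rw [div_le_div_iff₀ hN' hℓ]
    rw [div_le_iff₀ (by positivity)] at hlower
    linarith

/-- Fix `0 < ε < 1` and for an integer `L > 1` consider
`F(N) = (1-ε^N)^L / N` over positive integers `N`.  Then the maximizing `N` is
`Θ(ln L)` and the maximum value is `Θ(ln(1/ε) / ln L)` as `L → ∞`: there are positive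
constants `c₁, c₂, c₃, c₄` depending only on `ε` such that for all sufficiently large
`L`, some `N` with `c₁ ln L ≤ N ≤ c₂ ln L` attains the maximum and
`c₃ ln(1/ε)/ln L ≤ max_N F(N) ≤ c₄ ln(1/ε)/ln L`. -/
theorem stmt4 (ε : ℝ) (hε : 0 < ε) (hε1 : ε < 1) :
    ∃ c₁ c₂ c₃ c₄ : ℝ, 0 < c₁ ∧ 0 < c₂ ∧ 0 < c₃ ∧ 0 < c₄ ∧
      ∃ L₀ : ℕ, 1 < L₀ ∧ ∀ L : ℕ, L₀ ≤ L →
        ∃ N : ℕ, 1 ≤ N ∧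
          c₁ * Real.log L ≤ (N : ℝ) ∧ (N : ℝ) ≤ c₂ * Real.log L ∧
          (∀ N' : ℕ, 1 ≤ N' → (1 - ε ^ N') ^ L / (N' : ℝ) ≤ (1 - ε ^ N) ^ L / (N : ℝ)) ∧
          c₃ * Real.log (1 / ε) / Real.log L ≤ (1 - ε ^ N) ^ L / (N : ℝ) ∧
          (1 - ε ^ N) ^ L / (N : ℝ) ≤ c₄ * Real.log (1 / ε) / Real.log L := by
  set a := log (1 / ε)
  have ha : 0 < a := log_pos (one_lt_one_div hε hε1)
  have hlarge : ∀ᶠ L : ℕ in atTop, a ≤ log L ∧ log L * exp (-√L) < a / 6 :=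
    tendsto_natCast_atTop_atTop.eventually <| (tendsto_log_atTop.eventually_ge_atTop a).and <|
      tendsto_log_mul_exp_neg_sqrt_atTop.eventually (gt_mem_nhds (by positivity))
  obtain ⟨L₀, hL₀⟩ := eventually_atTop.1 hlarge
  refine ⟨1 / (2 * a), 6 / a, 1 / 6, 2, by positivity, by positivity, by norm_num, by norm_num,
    max L₀ 2, by omega, fun L hL => ?_⟩
  obtain ⟨hεL, hdecay⟩ := hL₀ L (le_of_max_le_left hL)
  have hL2 : 2 ≤ L := le_of_max_le_right hL
  obtain ⟨N, hN, hmax, hFN⟩ := exists_forall_one_sub_pow_div_le hε hε1 hL2 hεL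
  obtain ⟨hlower, hupper, hFN_le⟩ := bounds_of_log_div_le_one_sub_pow_div hε hε1 hL2 hN hdecay hFN
  refine ⟨N, hN, ?_, ?_, hmax, ?_, hFN_le⟩
  · rwa [one_div_mul_eq_div]
  · rwa [div_mul_eq_mul_div]
  · exact (by ring : 1 / 6 * a / log L = a / (6 * log L)).trans_le hFN
end

section
/- For every integer L>1, the equation e^t − 1 − L·t = 0 has a unique solution t*(L) in (0,∞), and this solution satisfies ln L < t*(L) < 2·ln L. Moreover, setting N* = t*(L)/ln(1/ε) for 0<ε<1, one has 1/4 ≤ (1−ε^{N*})^L < 1. -/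
/-!
Strict convexity of `exp` makes the secant slope `(exp t - 1) / t` strictly increasing on
`(0, ∞)`, so the positive roots of `exp t - 1 - C t` are the solutions of `(exp t - 1) / t = C`:
there is at most one, and comparing `C` with the slope at a point `s` locates the root relative
to `s`. At `s = log C` and `s = 2 log C` the comparison reduces to `1 - y < exp (-y)` and
`y < sinh y` for `y = log C`, which gives existence and the bounds; for `C ≥ 2` it also gives
`t > 1`. With `exp t = 1 + L t` one has `1 - exp (-t) = (1 + 1/(L t))⁻¹`, and
`(1 + a)^L ≤ exp (L a)` yields `(1 - exp (-t))^L ≥ exp (-1/t) > exp (-1) > 1/4`.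
-/

open Real Set

lemma strictMonoOn_exp_sub_one_div : StrictMonoOn (fun t => (exp t - 1) / t) (Ioi 0) := by
  intro x hx y hy hxy
  simpa using strictConvexOn_exp.secant_strict_mono (mem_univ 0) (mem_univ x) (mem_univ y)
    (ne_of_gt hx) (ne_of_gt hy) hxy

section LogBounds

variable {y : ℝ}

lemma exp_sub_one_sub_exp_mul_neg (hy : 0 < y) : exp y - 1 - exp y * y < 0 := by
  have h := mul_lt_mul_of_pos_left (add_one_lt_exp (neg_ne_zero.2 hy.ne')) (exp_pos y)
  rw [← exp_add, add_neg_cancel, exp_zero] at h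
  linarith

lemma exp_sub_one_sub_exp_mul_two_mul_pos (hy : 0 < y) :
    0 < exp (2 * y) - 1 - exp y * (2 * y) := by
  have h := self_lt_sinh_iff.2 hy
  have hsinh : exp (2 * y) - 1 = 2 * exp y * sinh y := by
    rw [sinh_eq, two_mul, exp_add, exp_neg]
    field_simp
  nlinarith [exp_pos y]

end LogBounds

section Root

variable {C s t : ℝ}

lemma exp_sub_one_sub_mul_neg_iff (hs : 0 < s) :
    exp s - 1 - C * s < 0 ↔ (exp s - 1) / s < C := by
  rw [div_lt_iff₀ hs, sub_neg, mul_comm]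

lemma exp_sub_one_sub_mul_pos_iff (hs : 0 < s) :
    0 < exp s - 1 - C * s ↔ C < (exp s - 1) / s := by
  rw [lt_div_iff₀ hs, sub_pos, mul_comm]

lemma exp_sub_one_div_eq_of_root (ht : 0 < t) (h : exp t - 1 - C * t = 0) :
    (exp t - 1) / t = C := by
  rw [div_eq_iff ht.ne']
  linarith

lemma lt_root_iff (hs : 0 < s) (ht : 0 < t) (h : exp t - 1 - C * t = 0) :
    s < t ↔ exp s - 1 - C * s < 0 := by
  rw [exp_sub_one_sub_mul_neg_iff hs, ← exp_sub_one_div_eq_of_root ht h]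
  exact (strictMonoOn_exp_sub_one_div.lt_iff_lt hs ht).symm

lemma root_lt_iff (hs : 0 < s) (ht : 0 < t) (h : exp t - 1 - C * t = 0) :
    t < s ↔ 0 < exp s - 1 - C * s := by
  rw [exp_sub_one_sub_mul_pos_iff hs, ← exp_sub_one_div_eq_of_root ht h]
  exact (strictMonoOn_exp_sub_one_div.lt_iff_lt ht hs).symm

lemma root_unique (hs : 0 < s) (ht : 0 < t) (hs₀ : exp s - 1 - C * s = 0)
    (ht₀ : exp t - 1 - C * t = 0) : s = t :=
  strictMonoOn_exp_sub_one_div.injOn hs ht <| by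
    simp only [exp_sub_one_div_eq_of_root hs hs₀, exp_sub_one_div_eq_of_root ht ht₀]

lemma log_lt_root (hC : 1 < C) (ht : 0 < t) (h : exp t - 1 - C * t = 0) : log C < t := by
  have hlog := log_pos hC
  refine (lt_root_iff hlog ht h).2 ?_
  simpa [exp_log (zero_lt_one.trans hC)] using exp_sub_one_sub_exp_mul_neg hlog

lemma root_lt_two_mul_log (hC : 1 < C) (ht : 0 < t) (h : exp t - 1 - C * t = 0) :
    t < 2 * log C := by
  have hlog := log_pos hC
  refine (root_lt_iff (by positivity) ht h).2 ?_
  simpa [exp_log (zero_lt_one.trans hC)] using exp_sub_one_sub_exp_mul_two_mul_pos hlog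

lemma one_lt_root (hC : exp 1 - 1 < C) (ht : 0 < t) (h : exp t - 1 - C * t = 0) : 1 < t :=
  (lt_root_iff one_pos ht h).2 (by linarith)

lemma existsUnique_root (hC : 1 < C) : ∃! t : ℝ, 0 < t ∧ exp t - 1 - C * t = 0 := by
  have hlog := log_pos hC
  have hexp := exp_log (zero_lt_one.trans hC)
  have hneg : exp (log C) - 1 - C * log C < 0 := by
    simpa [hexp] using exp_sub_one_sub_exp_mul_neg hlog
  have hpos : 0 < exp (2 * log C) - 1 - C * (2 * log C) := by
    simpa [hexp] using exp_sub_one_sub_exp_mul_two_mul_pos hlog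
  obtain ⟨t, ht, hroot⟩ := intermediate_value_Ioo (by linarith : log C ≤ 2 * log C)
    (f := fun t => exp t - 1 - C * t) (by fun_prop) ⟨hneg, hpos⟩
  exact ⟨t, ⟨hlog.trans ht.1, hroot⟩, fun s hs => root_unique hs.1 (hlog.trans ht.1) hs.2 hroot⟩

end Root

lemma rpow_div_log_one_div {ε : ℝ} (hε : 0 < ε) (hε1 : ε ≠ 1) (t : ℝ) :
    ε ^ (t / log (1 / ε)) = exp (-t) := by
  have hlog : log ε ≠ 0 := log_ne_zero_of_pos_of_ne_one hε hε1
  rw [rpow_def_of_pos hε, one_div, log_inv, div_neg, mul_neg, mul_div_cancel₀ t hlog]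

lemma exp_neg_inv_le_one_sub_exp_neg_pow {n : ℕ} {t : ℝ} (ht : 0 < t)
    (h : exp t - 1 - n * t = 0) : exp (-t⁻¹) ≤ (1 - exp (-t)) ^ n := by
  have hn : (0 : ℝ) < n := by
    rcases Nat.eq_zero_or_pos n with rfl | hn
    · simp [sub_eq_zero, ht.ne'] at h
    · exact_mod_cast hn
  have hnt : 0 < n * t := mul_pos hn ht
  have hsub : 1 - exp (-t) = (1 + (n * t)⁻¹)⁻¹ := by
    rw [exp_neg, show exp t = 1 + n * t by linarith]
    field_simp
    ring
  calc exp (-t⁻¹) = (exp ((n * t)⁻¹) ^ n)⁻¹ := by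
        rw [← exp_nat_mul, ← exp_neg, mul_inv, ← mul_assoc, mul_inv_cancel₀ hn.ne', one_mul]
    _ ≤ ((1 + (n * t)⁻¹) ^ n)⁻¹ := by
        gcongr
        linarith [add_one_le_exp (n * t)⁻¹]
    _ = (1 - exp (-t)) ^ n := by rw [hsub, inv_pow]

/-- For every integer `L > 1`, the equation `e^t - 1 - L·t = 0` has a
unique solution `t*(L)` in `(0, ∞)`, and it satisfies `ln L < t*(L) < 2 ln L`.
Moreover, for `0 < ε < 1`, setting `N* = t*(L)/ln(1/ε)` one has
`1/4 ≤ (1 - ε^{N*})^L < 1`. -/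
theorem stmt5 (L : ℕ) (hL : 1 < L) (ε : ℝ) (hε : 0 < ε) (hε1 : ε < 1) :
    (∃! t : ℝ, 0 < t ∧ Real.exp t - 1 - (L : ℝ) * t = 0) ∧
    ∀ t : ℝ, 0 < t → Real.exp t - 1 - (L : ℝ) * t = 0 →
      Real.log L < t ∧ t < 2 * Real.log L ∧
      1 / 4 ≤ (1 - ε ^ (t / Real.log (1 / ε))) ^ L ∧
      (1 - ε ^ (t / Real.log (1 / ε))) ^ L < 1 := by
  have hL' : (1 : ℝ) < L := by exact_mod_cast hL
  refine ⟨existsUnique_root hL', fun t ht h => ⟨log_lt_root hL' ht h, root_lt_two_mul_log hL' ht h,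
    ?_, ?_⟩⟩ <;> rw [rpow_div_log_one_div hε hε1.ne t]
  · have h2 : (2 : ℝ) ≤ L := by exact_mod_cast hL
    have h1 : 1 < t := one_lt_root (by linarith [exp_one_lt_three]) ht h
    calc (1 : ℝ) / 4 ≤ exp (-1) := by
          rw [exp_neg, one_div]
          exact inv_anti₀ (exp_pos 1) (by linarith [exp_one_lt_three])
      _ ≤ exp (-t⁻¹) := exp_le_exp.2 (neg_le_neg (inv_le_one_of_one_le₀ h1.le))
      _ ≤ (1 - exp (-t)) ^ L := exp_neg_inv_le_one_sub_exp_neg_pow ht h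
  · exact pow_lt_one₀ (sub_nonneg.2 (exp_le_one_iff.2 (by linarith)))
      (sub_lt_self 1 (exp_pos _)) (by omega)
end

section
/- Fix a prime power q, erasure probability ε∈(0,1), batch size M ≥ 1 and inner block-length N ≥ 1. Let P be the (M+1)×(M+1) matrix with (i,j) entry p_{i,j} = Σ_{k=j}^{N} C(N,k)(1−ε)^k ε^{N−k} ζ_j^{i,k} for i ≥ j and p_{i,j} = 0 for i < j, where ζ_j^{i,k} = ζ_j^i ζ_j^k / (ζ_j^j q^{(i−j)(k−j)}) and ζ_r^m = ∏_{t=0}^{r−1}(1 − q^{−m+t}) (with ζ_0^m = 1). Let π_0 = (0,0,…,0,1) and π_L = π_0 P^L. Then the expected rank E[π_L] = Σ_{j=0}^{M} j·(π_L)_j satisfies E[π_L] = Θ( (1 − (ε + (1−ε)/q)^N)^L ) as L→∞. -/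
open scoped BigOperators

/-- `ζ_r^m = ∏_{t=0}^{r-1} (1 - q^{-m+t})`, the probability-related quantity for ranks of
uniformly random matrices over `F_q` (`ζ_0^m = 1`). -/
noncomputable def zeta (q r m : ℕ) : ℝ :=
  ∏ t ∈ Finset.range r, (1 - (q : ℝ) ^ (-(m : ℤ) + (t : ℤ)))

/-- The `(M+1)×(M+1)` rank-transition matrix `P` of random linear recoding over a packet
erasure channel with erasure probability `ε`, inner block-length `N` and field size `q`:
`p_{i,j} = Σ_{k=j}^{N} C(N,k)(1-ε)^k ε^{N-k} ζ_j^{i,k}` for `i ≥ j` and `0` otherwise,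
where `ζ_j^{i,k} = ζ_j^i ζ_j^k / (ζ_j^j q^{(i-j)(k-j)})`. -/
noncomputable def batsP (q : ℕ) (ε : ℝ) (N M : ℕ) :
    Matrix (Fin (M + 1)) (Fin (M + 1)) ℝ :=
  Matrix.of fun i j =>
    if (j : ℕ) ≤ (i : ℕ) then
      ∑ k ∈ Finset.Icc (j : ℕ) N,
        (N.choose k : ℝ) * (1 - ε) ^ k * ε ^ (N - k) *
          (zeta q j i * zeta q j k /
            (zeta q j j * (q : ℝ) ^ (((i : ℕ) - (j : ℕ)) * (k - (j : ℕ)))))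
    else 0

/-- Expected rank `E[π_L] = Σ_j j (π_L)_j` where `π_L = π_0 P^L` and
`π_0 = (0, …, 0, 1)`. -/
noncomputable def batsE (q : ℕ) (ε : ℝ) (N M L : ℕ) : ℝ :=
  ∑ j : Fin (M + 1),
    (j : ℝ) *
      Matrix.vecMul (fun j' : Fin (M + 1) => if (j' : ℕ) = M then 1 else 0)
        ((batsP q ε N M) ^ L) j

/-!
`P` is lower triangular with `p₁₁ = λ := 1 - (ε + (1 - ε)/q)^N` and `pᵢᵢ ≤ λ - δ` for `i ≥ 2`,
where `δ > 0` is the `k = 1` term of `p₁₁`: indeed `ζ_i^k ≤ ζ_1^k` and the sum defining `pᵢᵢ`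
starts at `k = i`. The lower bound comes from staying at rank `1`:
`(P^(L+1))_{M,1} ≥ p_{M,1} λ^L`. For the upper bound, the weight `v = (0, B, B², …, B^M)`
(zero on the absorbing rank `0`) satisfies `P v ≤ λ v` once `B` is large, because the entries
below the diagonal are bounded; hence `E[π_L] ≤ (P^L v)_M ≤ λ^L B^M`.
-/

open Finset

namespace Matrix

variable {n R : Type*} [Fintype n] [CommSemiring R] [PartialOrder R] [IsOrderedRing R]
  {A : Matrix n n R}

theorem mulVec_mono_of_nonneg (hA : ∀ i j, 0 ≤ A i j) {v w : n → R} (h : v ≤ w) :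
    A *ᵥ v ≤ A *ᵥ w :=
  fun i => dotProduct_le_dotProduct_of_nonneg_left h (hA i)

variable [DecidableEq n]

theorem pow_mulVec_le_of_mulVec_le (hA : ∀ i j, 0 ≤ A i j) {v : n → R} {c : R} (hc : 0 ≤ c)
    (hv : A *ᵥ v ≤ c • v) (L : ℕ) : A ^ L *ᵥ v ≤ c ^ L • v := by
  induction L with
  | zero => simp
  | succ L ih =>
    calc A ^ (L + 1) *ᵥ v = A *ᵥ (A ^ L *ᵥ v) := by rw [pow_succ', mulVec_mulVec]
      _ ≤ A *ᵥ (c ^ L • v) := mulVec_mono_of_nonneg hA ih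
      _ = c ^ L • (A *ᵥ v) := mulVec_smul _ _ _
      _ ≤ c ^ L • (c • v) := smul_le_smul_of_nonneg_left hv (pow_nonneg hc L)
      _ = c ^ (L + 1) • v := by rw [smul_smul, pow_succ]

theorem apply_mul_pow_le_pow_succ_apply (hA : ∀ i j, 0 ≤ A i j) (a b : n) (L : ℕ) :
    A a b * A b b ^ L ≤ (A ^ (L + 1)) a b := by
  induction L with
  | zero => simp
  | succ L ih =>
    calc A a b * A b b ^ (L + 1) = A a b * A b b ^ L * A b b := by ring
      _ ≤ (A ^ (L + 1)) a b * A b b := mul_le_mul_of_nonneg_right ih (hA b b)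
      _ ≤ ∑ s, (A ^ (L + 1)) a s * A s b :=
        single_le_sum (fun s _ => mul_nonneg (pow_apply_nonneg hA _ a s) (hA s b)) (mem_univ b)
      _ = (A ^ (L + 1 + 1)) a b := by rw [pow_succ _ (L + 1), mul_apply]

end Matrix

open Matrix

def geomVec (n : ℕ) (B : ℝ) : Fin (n + 1) → ℝ :=
  fun j => if (j : ℕ) = 0 then 0 else B ^ (j : ℕ)

section geomVec

variable {n : ℕ} {B : ℝ}

theorem geomVec_nonneg (hB : 0 ≤ B) (j : Fin (n + 1)) : 0 ≤ geomVec n B j := by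
  unfold geomVec; split_ifs <;> positivity

theorem geomVec_le_pow_pred (hB : 1 ≤ B) {i j : Fin (n + 1)} (hji : j < i) :
    geomVec n B j ≤ B ^ ((i : ℕ) - 1) := by
  unfold geomVec
  split_ifs
  · positivity
  · exact pow_le_pow_right₀ hB (by omega)

theorem natCast_le_geomVec (hB : 2 ≤ B) (j : Fin (n + 1)) : (j : ℝ) ≤ geomVec n B j := by
  unfold geomVec
  split_ifs with hj
  · simp [hj]
  · calc (j : ℝ) ≤ 2 ^ (j : ℕ) := by exact_mod_cast Nat.lt_two_pow_self.le
      _ ≤ B ^ (j : ℕ) := pow_le_pow_left₀ zero_le_two hB _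

theorem mulVec_geomVec_le {A : Matrix (Fin (n + 1)) (Fin (n + 1)) ℝ} {C lam δ : ℝ}
    (hA : ∀ i j, 0 ≤ A i j) (hA_tri : ∀ i j, i < j → A i j = 0) (hC : ∀ i j, A i j ≤ C)
    (hdiag₁ : ∀ i : Fin (n + 1), (i : ℕ) = 1 → A i i ≤ lam)
    (hdiag₂ : ∀ i : Fin (n + 1), 2 ≤ (i : ℕ) → A i i ≤ lam - δ)
    (hB : 1 ≤ B) (hCB : C * n ≤ δ * B) :
    A *ᵥ geomVec n B ≤ lam • geomVec n B := by
  intro i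
  set v := geomVec n B
  have hv : 0 ≤ v := geomVec_nonneg (by linarith)
  rw [Pi.smul_apply, smul_eq_mul, mulVec, dotProduct, ← add_sum_erase _ _ (mem_univ i)]
  rcases Nat.lt_or_ge (i : ℕ) 2 with hi | hi
  · have hoff : ∀ j ∈ univ.erase i, A i j * v j = 0 := by
      intro j hj
      rcases lt_or_gt_of_ne (ne_of_mem_erase hj) with hji | hij
      · have hj : (j : ℕ) = 0 := by omega
        simp [v, geomVec, hj]
      · simp [hA_tri i j hij]
    rw [sum_eq_zero hoff, add_zero]
    by_cases hi0 : (i : ℕ) = 0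
    · simp [v, geomVec, hi0]
    · exact mul_le_mul_of_nonneg_right (hdiag₁ i (by omega)) (hv i)
  · have hC0 : 0 ≤ C := (hA i i).trans (hC i i)
    have hoff : ∀ j ∈ univ.erase i, A i j * v j ≤ C * B ^ ((i : ℕ) - 1) := by
      intro j hj
      rcases lt_or_gt_of_ne (ne_of_mem_erase hj) with hji | hij
      · exact mul_le_mul (hC i j) (geomVec_le_pow_pred hB hji) (hv j) hC0
      · simp only [hA_tri i j hij, zero_mul]; positivity
    have hvi : v i = B ^ ((i : ℕ) - 1) * B := by
      simp only [v, geomVec, if_neg (show (i : ℕ) ≠ 0 by omega), ← pow_succ]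
      congr 1; omega
    have hcard : ((univ.erase i).card : ℝ) = n := by simp [card_erase_of_mem]
    calc A i i * v i + ∑ j ∈ univ.erase i, A i j * v j
        ≤ (lam - δ) * v i + (univ.erase i).card • (C * B ^ ((i : ℕ) - 1)) :=
          add_le_add (mul_le_mul_of_nonneg_right (hdiag₂ i hi) (hv i))
            (sum_le_card_nsmul _ _ _ hoff)
      _ = lam * v i - (δ * B - C * n) * B ^ ((i : ℕ) - 1) := by
          rw [nsmul_eq_mul, hcard, hvi]; ring
      _ ≤ lam * v i := sub_le_self _ (mul_nonneg (by linarith) (by positivity))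

end geomVec

section bats

variable {q : ℕ}

theorem one_sub_zpow_mem_Ioc (hq : 1 < q) {t m : ℕ} (ht : t < m) :
    1 - (q : ℝ) ^ (-(m : ℤ) + t) ∈ Set.Ioc 0 1 := by
  have hq' : (1 : ℝ) < q := by exact_mod_cast hq
  exact ⟨sub_pos.mpr (zpow_lt_one_of_neg₀ hq' (by omega)),
    sub_le_self _ (zpow_pos (by linarith) _).le⟩

theorem zeta_pos (hq : 1 < q) {r m : ℕ} (h : r ≤ m) : 0 < zeta q r m :=
  prod_pos fun t ht => (one_sub_zpow_mem_Ioc hq (by simp at ht; omega)).1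

theorem zeta_le_zeta_of_le (hq : 1 < q) {s r m : ℕ} (hsr : s ≤ r) (hrm : r ≤ m) :
    zeta q r m ≤ zeta q s m := by
  have hfac : ∀ t ∈ Ico s r, 1 - (q : ℝ) ^ (-(m : ℤ) + t) ∈ Set.Ioc 0 1 :=
    fun t ht => one_sub_zpow_mem_Ioc hq (by simp at ht; omega)
  rw [zeta, ← prod_range_mul_prod_Ico _ hsr]
  exact mul_le_of_le_one_right (zeta_pos hq (hsr.trans hrm)).le
    (prod_le_one (fun t ht => (hfac t ht).1.le) fun t ht => (hfac t ht).2)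

theorem zeta_one (q k : ℕ) : zeta q 1 k = 1 - ((q : ℝ)⁻¹) ^ k := by
  simp [zeta, inv_pow]

theorem sum_choose_mul_zeta_one (q : ℕ) (ε : ℝ) (N : ℕ) :
    ∑ k ∈ Icc 1 N, (N.choose k : ℝ) * (1 - ε) ^ k * ε ^ (N - k) * zeta q 1 k =
      1 - (ε + (1 - ε) / q) ^ N := by
  rw [sum_subset (s₂ := range (N + 1)) (fun k hk => by simp at hk ⊢; omega) fun k hk hk' => by
    obtain rfl : k = 0 := by simp at hk hk'; omega
    simp [zeta_one]]
  have h₁ : ∑ k ∈ range (N + 1), (N.choose k : ℝ) * (1 - ε) ^ k * ε ^ (N - k) = 1 := by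
    calc _ = ((1 - ε) + ε) ^ N := by rw [add_pow]; exact sum_congr rfl fun k _ => by ring
      _ = 1 := by simp
  have h₂ : ∑ k ∈ range (N + 1), (N.choose k : ℝ) * (1 - ε) ^ k * ε ^ (N - k) * (q : ℝ)⁻¹ ^ k =
      (ε + (1 - ε) / q) ^ N := by
    rw [add_comm ε, add_pow]
    exact sum_congr rfl fun k _ => by rw [div_pow, inv_pow]; ring
  simp only [zeta_one, mul_sub, mul_one, sum_sub_distrib, h₁, h₂]

theorem batsP_apply_of_lt (ε : ℝ) (N : ℕ) {M : ℕ} {i j : Fin (M + 1)} (hij : i < j) :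
    batsP q ε N M i j = 0 := by
  simp [batsP, not_le.mpr hij]

variable {ε : ℝ}

theorem batsP_nonneg (hq : 1 < q) (hε : 0 ≤ ε) (hε1 : ε ≤ 1) (N M : ℕ) (i j : Fin (M + 1)) :
    0 ≤ batsP q ε N M i j := by
  simp only [batsP, of_apply]
  split_ifs with hji
  · refine sum_nonneg fun k hk => ?_
    have hjk := (mem_Icc.mp hk).1
    have := zeta_pos hq hji
    have := zeta_pos hq hjk
    have := zeta_pos hq (le_refl (j : ℕ))
    have : (0 : ℝ) ≤ 1 - ε := by linarith
    positivity
  · exact le_rfl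

theorem batsP_apply_self (hq : 1 < q) (N : ℕ) {M : ℕ} (i : Fin (M + 1)) :
    batsP q ε N M i i =
      ∑ k ∈ Icc (i : ℕ) N, (N.choose k : ℝ) * (1 - ε) ^ k * ε ^ (N - k) * zeta q i k := by
  have := (zeta_pos hq (le_refl (i : ℕ))).ne'
  simp only [batsP, of_apply, le_refl, if_true, Nat.sub_self, zero_mul, pow_zero, mul_one]
  refine sum_congr rfl fun k _ => ?_
  field_simp

theorem batsP_apply_self_of_val_eq_one (hq : 1 < q) (N : ℕ) {M : ℕ} {i : Fin (M + 1)}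
    (hi : (i : ℕ) = 1) : batsP q ε N M i i = 1 - (ε + (1 - ε) / q) ^ N := by
  rw [batsP_apply_self hq, hi, sum_choose_mul_zeta_one]

theorem batsP_apply_self_le (hq : 1 < q) (hε : 0 ≤ ε) (hε1 : ε ≤ 1) {N M : ℕ} (hN : 1 ≤ N)
    {i : Fin (M + 1)} (hi : 2 ≤ (i : ℕ)) :
    batsP q ε N M i i ≤
      1 - (ε + (1 - ε) / q) ^ N - N * (1 - ε) * ε ^ (N - 1) * (1 - (q : ℝ)⁻¹) := by
  set b : ℕ → ℝ := fun k => (N.choose k : ℝ) * (1 - ε) ^ k * ε ^ (N - k)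
  have h1ε : 0 ≤ 1 - ε := by linarith
  have hb : ∀ k, 0 ≤ b k := fun k => by positivity
  have hsplit : ∑ k ∈ Icc 1 N, b k * zeta q 1 k =
      b 1 * zeta q 1 1 + ∑ k ∈ Icc 2 N, b k * zeta q 1 k := by
    rw [← insert_Icc_succ_left_eq_Icc hN, sum_insert (by simp)]
    rfl
  calc batsP q ε N M i i = ∑ k ∈ Icc (i : ℕ) N, b k * zeta q i k := batsP_apply_self hq N i
    _ ≤ ∑ k ∈ Icc (i : ℕ) N, b k * zeta q 1 k := sum_le_sum fun k hk =>
      mul_le_mul_of_nonneg_left (zeta_le_zeta_of_le hq (by omega) (mem_Icc.mp hk).1) (hb k)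
    _ ≤ ∑ k ∈ Icc 2 N, b k * zeta q 1 k := sum_le_sum_of_subset_of_nonneg
      (Icc_subset_Icc_left hi) fun k hk _ =>
        mul_nonneg (hb k) (zeta_pos hq (by simp at hk; omega)).le
    _ = ∑ k ∈ Icc 1 N, b k * zeta q 1 k - b 1 * zeta q 1 1 := by rw [hsplit]; ring
    _ = _ := by rw [sum_choose_mul_zeta_one, zeta_one]; simp [b]

theorem batsP_last_one_pos (hq : 1 < q) (hε : 0 ≤ ε) (hε1 : ε < 1) {N M : ℕ} (hN : 1 ≤ N)
    (hM : 1 ≤ M) : 0 < batsP q ε N M (Fin.last M) ⟨1, by omega⟩ := by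
  have h1ε : 0 < 1 - ε := by linarith
  have := zeta_pos hq hM
  have := zeta_pos hq (le_refl 1)
  simp only [batsP, of_apply, Fin.val_last, if_pos hM]
  refine sum_pos' (fun k hk => ?_) ⟨N, by simp [hN], ?_⟩
  · have := zeta_pos hq (mem_Icc.mp hk).1
    positivity
  · have := zeta_pos hq hN
    have := Nat.choose_pos (le_refl N)
    simp only [Nat.sub_self, pow_zero]
    positivity

theorem batsE_eq_sum (q : ℕ) (ε : ℝ) (N M L : ℕ) :
    batsE q ε N M L =
      ∑ j : Fin (M + 1), ((j : ℕ) : ℝ) * (batsP q ε N M ^ L) (Fin.last M) j := by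
  have hπ₀ : (fun j : Fin (M + 1) => if (j : ℕ) = M then (1 : ℝ) else 0) =
      Pi.single (Fin.last M) 1 := by
    ext j
    simp [Pi.single_apply, Fin.ext_iff]
  simp [batsE, hπ₀, single_vecMul]

theorem pow_apply_last_one_le_batsE (hq : 1 < q) (hε : 0 ≤ ε) (hε1 : ε ≤ 1) {N M : ℕ}
    (hM : 1 ≤ M) (L : ℕ) : (batsP q ε N M ^ L) (Fin.last M) ⟨1, by omega⟩ ≤ batsE q ε N M L := by
  rw [batsE_eq_sum]
  have hP := pow_apply_nonneg (batsP_nonneg hq hε hε1 N M) L (Fin.last M)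
  calc _ = (((⟨1, by omega⟩ : Fin (M + 1)) : ℕ) : ℝ) *
        (batsP q ε N M ^ L) (Fin.last M) ⟨1, by omega⟩ := by simp
    _ ≤ _ := single_le_sum
        (f := fun j : Fin (M + 1) => (j : ℝ) * (batsP q ε N M ^ L) (Fin.last M) j)
        (fun j _ => mul_nonneg (Nat.cast_nonneg _) (hP j)) (mem_univ _)

theorem batsE_le_pow_mulVec_geomVec (hq : 1 < q) (hε : 0 ≤ ε) (hε1 : ε ≤ 1) {N M : ℕ} {B : ℝ}
    (hB : 2 ≤ B) (L : ℕ) : batsE q ε N M L ≤ (batsP q ε N M ^ L *ᵥ geomVec M B) (Fin.last M) := by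
  have hP := pow_apply_nonneg (batsP_nonneg hq hε hε1 N M) L (Fin.last M)
  rw [batsE_eq_sum, mulVec, dotProduct]
  exact sum_le_sum fun j _ => by
    rw [mul_comm]
    exact mul_le_mul_of_nonneg_left (natCast_le_geomVec hB j) (hP j)

theorem exists_batsP_mulVec_geomVec_le (hq : 1 < q) (hε : 0 < ε) (hε1 : ε < 1) {N M : ℕ}
    (hN : 1 ≤ N) : ∃ B : ℝ, 2 ≤ B ∧
      batsP q ε N M *ᵥ geomVec M B ≤ (1 - (ε + (1 - ε) / q) ^ N) • geomVec M B := by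
  set δ : ℝ := N * (1 - ε) * ε ^ (N - 1) * (1 - (q : ℝ)⁻¹)
  have hδ : 0 < δ := by
    have : (q : ℝ)⁻¹ < 1 := inv_lt_one_of_one_lt₀ (by exact_mod_cast hq)
    have : (0 : ℝ) < N := by exact_mod_cast hN
    have : 0 < 1 - ε := by linarith
    have : 0 < 1 - (q : ℝ)⁻¹ := by linarith
    positivity
  obtain ⟨C, hC⟩ :=
    Finite.exists_le fun ij : Fin (M + 1) × Fin (M + 1) => batsP q ε N M ij.1 ij.2
  set B := max 2 (C * M / δ)
  have hB : 2 ≤ B := le_max_left _ _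
  have hCB : C * M ≤ δ * B := (div_le_iff₀' hδ).mp (le_max_right _ _)
  exact ⟨B, hB, mulVec_geomVec_le (batsP_nonneg hq hε.le hε1.le N M)
    (fun i j => batsP_apply_of_lt ε N) (fun i j => hC (i, j))
    (fun i hi => (batsP_apply_self_of_val_eq_one hq N hi).le)
    (fun i hi => batsP_apply_self_le hq hε.le hε1.le hN hi) (by linarith) hCB⟩

end bats

/-- For a prime power `q`, erasure probability `ε ∈ (0,1)`, batch size
`M ≥ 1` and inner block-length `N ≥ 1`, the expected rank `E[π_L]` of a batch at node
`L` under random linear recoding satisfies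
`E[π_L] = Θ((1 - (ε + (1-ε)/q)^N)^L)` as `L → ∞`. -/
theorem stmt6 (q : ℕ) (hq : ∃ p k : ℕ, Nat.Prime p ∧ 0 < k ∧ q = p ^ k)
    (ε : ℝ) (hε : 0 < ε) (hε1 : ε < 1) (M N : ℕ) (hM : 1 ≤ M) (hN : 1 ≤ N) :
    ∃ c₁ c₂ : ℝ, 0 < c₁ ∧ 0 < c₂ ∧ ∃ L₀ : ℕ, ∀ L : ℕ, L₀ ≤ L →
      c₁ * (1 - (ε + (1 - ε) / q) ^ N) ^ L ≤ batsE q ε N M L ∧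
      batsE q ε N M L ≤ c₂ * (1 - (ε + (1 - ε) / q) ^ N) ^ L := by
  have hq1 : 1 < q := by
    obtain ⟨p, k, hp, hk, rfl⟩ := hq
    exact Nat.one_lt_pow hk.ne' hp.one_lt
  set lam := 1 - (ε + (1 - ε) / q) ^ N
  have hlam : 0 < lam := by
    have : (1 - ε) / q < 1 - ε := div_lt_self (by linarith) (by exact_mod_cast hq1)
    exact sub_pos.mpr (pow_lt_one₀ (by positivity) (by linarith) (by omega))
  have hP := batsP_nonneg hq1 hε.le hε1.le N M
  have hone : batsP q ε N M ⟨1, by omega⟩ ⟨1, by omega⟩ = lam :=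
    batsP_apply_self_of_val_eq_one hq1 N rfl
  obtain ⟨B, hB, hdrift⟩ := exists_batsP_mulVec_geomVec_le (M := M) hq1 hε hε1 hN
  refine ⟨batsP q ε N M (Fin.last M) ⟨1, by omega⟩ / lam, B ^ M,
    div_pos (batsP_last_one_pos hq1 hε.le hε1 hN hM) hlam, by positivity, 1, fun L hL => ⟨?_, ?_⟩⟩
  · obtain ⟨L, rfl⟩ := Nat.exists_eq_add_of_le' hL
    calc batsP q ε N M (Fin.last M) ⟨1, by omega⟩ / lam * lam ^ (L + 1)
        = batsP q ε N M (Fin.last M) ⟨1, by omega⟩ * lam ^ L := by field_simp; ring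
      _ ≤ (batsP q ε N M ^ (L + 1)) (Fin.last M) ⟨1, by omega⟩ :=
          hone ▸ apply_mul_pow_le_pow_succ_apply hP (Fin.last M) ⟨1, by omega⟩ L
      _ ≤ batsE q ε N M (L + 1) := pow_apply_last_one_le_batsE hq1 hε.le hε1.le hM _
  · calc batsE q ε N M L ≤ (batsP q ε N M ^ L *ᵥ geomVec M B) (Fin.last M) :=
          batsE_le_pow_mulVec_geomVec hq1 hε.le hε1.le hB L
      _ ≤ (lam ^ L • geomVec M B) (Fin.last M) :=
          pow_mulVec_le_of_mulVec_le hP hlam.le hdrift L _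
      _ = B ^ M * lam ^ L := by simp [geomVec, mul_comm, show M ≠ 0 by omega]
end

section
/- Let Q: 𝒬ᵢ→𝒬ₒ be a DMC with ε_Q > 0, represented by channel function α(x,z)=z_x and status tuple Z=(Z_x)_{x∈𝒬ᵢ} with P(Z_x=y)=Q(y|x). Then for every non-empty set 𝒜 ⊆ 𝒬ᵢ there exist a set 𝒵 of values of Z and a set ℬ ⊆ 𝒬ₒ with |ℬ| ≤ ⌈|𝒜|/2⌉ such that α(x,z) ∈ ℬ for every x∈𝒜 and z∈𝒵, and P(Z ∈ 𝒵) ≥ ε_Q^{|𝒜|}. -/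
open scoped BigOperators

lemma stmt10_pairing {Qi Qo : Type} [DecidableEq Qi] [DecidableEq Qo]
    (Q : Matrix Qi Qo ℝ) (εQ : ℝ) [Nonempty Qo]
    (hεQ : ∀ x x' : Qi, ∃ y, εQ ≤ Q x y ∧ εQ ≤ Q x' y) :
    ∀ n (𝒜 : Finset Qi), 𝒜.card = n →
      ∃ b : Qi → Qo, (𝒜.image b).card ≤ (n + 1) / 2 ∧ ∀ x ∈ 𝒜, εQ ≤ Q x (b x) := by
  intro n
  induction n using Nat.strong_induction_on with
  | _ n ih =>
    match n with
    | 0 =>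
      intro 𝒜 hcard
      refine ⟨fun _ => Classical.arbitrary Qo, ?_, ?_⟩
      · simp [Finset.card_eq_zero.mp hcard]
      · intro x hx
        simp [Finset.card_eq_zero.mp hcard] at hx
    | 1 =>
      intro 𝒜 hcard
      obtain ⟨x, hx⟩ := Finset.card_eq_one.mp hcard
      obtain ⟨y, hy, _⟩ := hεQ x x
      refine ⟨fun _ => y, ?_, ?_⟩
      · simp [hx]
      · intro t ht
        rw [hx, Finset.mem_singleton] at ht
        subst ht; exact hy
    | (n + 2) =>
      intro 𝒜 hcard
      have h1 : 𝒜.Nonempty := Finset.card_pos.mp (by omega)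
      obtain ⟨x, hx⟩ := h1
      have h2 : (𝒜.erase x).Nonempty := by
        apply Finset.card_pos.mp
        rw [Finset.card_erase_of_mem hx, hcard]; omega
      obtain ⟨x', hx'⟩ := h2
      have hx'x : x' ≠ x := Finset.ne_of_mem_erase hx'
      have hx'𝒜 : x' ∈ 𝒜 := Finset.mem_of_mem_erase hx'
      obtain ⟨y, hy1, hy2⟩ := hεQ x x'
      set 𝒜' := (𝒜.erase x).erase x' with h𝒜'
      have hcard' : 𝒜'.card = n := by
        rw [h𝒜', Finset.card_erase_of_mem hx', Finset.card_erase_of_mem hx, hcard]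
        omega
      obtain ⟨b', hb1, hb2⟩ := ih n (by omega) 𝒜' hcard'
      refine ⟨fun t => if t = x ∨ t = x' then y else b' t, ?_, ?_⟩
      · have hsub : 𝒜.image (fun t => if t = x ∨ t = x' then y else b' t) ⊆
            insert y (𝒜'.image b') := by
          intro u hu
          obtain ⟨t, ht, hteq⟩ := Finset.mem_image.mp hu
          by_cases h : t = x ∨ t = x'
          · simp [h] at hteq; simp [hteq.symm]
          · push_neg at h
            simp only [if_neg (not_or.mpr h)] at hteq
            apply Finset.mem_insert_of_mem
            exact Finset.mem_image.mpr ⟨t, by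
              rw [h𝒜']; exact Finset.mem_erase.mpr ⟨h.2, Finset.mem_erase.mpr ⟨h.1, ht⟩⟩, hteq⟩
        calc (𝒜.image _).card ≤ (insert y (𝒜'.image b')).card := Finset.card_le_card hsub
          _ ≤ (𝒜'.image b').card + 1 := Finset.card_insert_le _ _
          _ ≤ (n + 1) / 2 + 1 := by omega
          _ ≤ (n + 2 + 1) / 2 := by omega
      · intro t ht
        by_cases h : t = x ∨ t = x'
        · show εQ ≤ Q t (if t = x ∨ t = x' then y else b' t)
          rw [if_pos h]
          rcases h with h | h <;> subst h
          · exact hy1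
          · exact hy2
        · push_neg at h
          show εQ ≤ Q t (if t = x ∨ t = x' then y else b' t)
          rw [if_neg (not_or.mpr h)]
          exact hb2 t (by
            rw [h𝒜']; exact Finset.mem_erase.mpr ⟨h.2, Finset.mem_erase.mpr ⟨h.1, ht⟩⟩)

/-- Let `Q : 𝒬ᵢ → 𝒬ₒ` be a DMC with `ε_Q > 0`, where `ε_Q` is the
maximum value such that for every pair of inputs `x, x'` there is an output `y` with
`Q(y|x) ≥ ε_Q` and `Q(y|x') ≥ ε_Q`.  Represent `Q` by the channel function
`α(x, z) = z x` with status tuple `Z = (Z_x)_{x∈𝒬ᵢ}`, `P(Z_x = y) = Q(y|x)` (the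
entries independent, so `P(Z = z) = ∏_x Q(z x|x)`).  Then for every non-empty
`𝒜 ⊆ 𝒬ᵢ` there are a set `𝒵` of status values and a set `ℬ ⊆ 𝒬ₒ` with
`|ℬ| ≤ ⌈|𝒜|/2⌉` such that `α(x, z) ∈ ℬ` for all `x ∈ 𝒜`, `z ∈ 𝒵`, and
`P(Z ∈ 𝒵) ≥ ε_Q^{|𝒜|}`. -/
theorem stmt10 {Qi Qo : Type} [Fintype Qi] [Fintype Qo] [Nonempty Qi] [Nonempty Qo]
    (Q : Matrix Qi Qo ℝ) (hQ : IsStoch Q)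
    (εQ : ℝ) (hεpos : 0 < εQ)
    (hεQ : ∀ x x' : Qi, ∃ y, εQ ≤ Q x y ∧ εQ ≤ Q x' y)
    (hmax : ∀ ε' : ℝ, (∀ x x' : Qi, ∃ y, ε' ≤ Q x y ∧ ε' ≤ Q x' y) → ε' ≤ εQ) :
    ∀ 𝒜 : Finset Qi, 𝒜.Nonempty →
      ∃ (𝒵 : Finset (Qi → Qo)) (ℬ : Finset Qo),
        ℬ.card ≤ (𝒜.card + 1) / 2 ∧
        (∀ x ∈ 𝒜, ∀ z ∈ 𝒵, z x ∈ ℬ) ∧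
        εQ ^ 𝒜.card ≤ ∑ z ∈ 𝒵, ∏ x, Q x (z x) := by
  classical
  intro 𝒜 _
  obtain ⟨b, hb1, hb2⟩ := stmt10_pairing Q εQ hεQ 𝒜.card 𝒜 rfl
  set t : Qi → Finset Qo := fun x => if x ∈ 𝒜 then {b x} else Finset.univ with ht
  refine ⟨Fintype.piFinset t, 𝒜.image b, hb1, ?_, ?_⟩
  · intro x hx z hz
    have := Fintype.mem_piFinset.mp hz x
    rw [ht] at this
    simp only [if_pos hx, Finset.mem_singleton] at this
    rw [this]
    exact Finset.mem_image_of_mem b hx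
  · have hsum : ∑ z ∈ Fintype.piFinset t, ∏ x, Q x (z x)
        = ∏ x, ∑ y ∈ t x, Q x y := (Finset.prod_univ_sum t fun x y => Q x y).symm
    rw [hsum]
    have heq : ∀ x : Qi, ∑ y ∈ t x, Q x y = if x ∈ 𝒜 then Q x (b x) else 1 := by
      intro x
      rw [ht]
      by_cases h : x ∈ 𝒜
      · simp [h]
      · simp [h, (hQ x).2]
    rw [Finset.prod_congr rfl fun x _ => heq x]
    rw [Finset.prod_ite_mem Finset.univ 𝒜 fun x => Q x (b x), Finset.univ_inter]
    calc εQ ^ 𝒜.card = ∏ _x ∈ 𝒜, εQ := (Finset.prod_const εQ).symm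
      _ ≤ ∏ x ∈ 𝒜, Q x (b x) :=
        Finset.prod_le_prod (fun x _ => le_of_lt hεpos) (fun x hx => hb2 x hx)
end

section
/- Let a = (a_1,…,a_n) and a′ = (a′_1,…,a′_n) be probability vectors (nonnegative entries summing to 1), and suppose |a_j − a′_j| > δ for some index j and some δ > 0. Then 1/2 − Σ_{k : a_k + a′_k > 0} a_k a′_k/(a_k + a′_k) = (1/4)·Σ_{k : a_k + a′_k > 0} (a_k − a′_k)²/(a_k + a′_k) ≥ δ²/8; consequently ϱ := Σ_{k : a_k + a′_k > 0} a_k²/(a_k + a′_k) satisfies ϱ ≥ 1/2 + δ²/8. -/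
open scoped BigOperators

/-- Let `a` and `a'` be probability vectors with `|a j - a' j| > δ`
for some index `j` and some `δ > 0`.  Then
`1/2 - Σ_k a_k a'_k/(a_k + a'_k) = (1/4) Σ_k (a_k - a'_k)²/(a_k + a'_k) ≥ δ²/8`
(sums over `k` with `a_k + a'_k > 0`); consequently
`ϱ := Σ_k a_k²/(a_k + a'_k)` satisfies `ϱ ≥ 1/2 + δ²/8`. -/
theorem stmt16 {n : ℕ} (a a' : Fin n → ℝ)
    (ha : ∀ k, 0 ≤ a k) (ha' : ∀ k, 0 ≤ a' k)
    (hs : ∑ k, a k = 1) (hs' : ∑ k, a' k = 1)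
    (δ : ℝ) (hδ : 0 < δ) (j : Fin n) (hj : δ < |a j - a' j|) :
    (1 / 2 - ∑ k ∈ Finset.univ.filter (fun k => 0 < a k + a' k),
        a k * a' k / (a k + a' k)
      = (1 / 4) * ∑ k ∈ Finset.univ.filter (fun k => 0 < a k + a' k),
          (a k - a' k) ^ 2 / (a k + a' k)) ∧
    δ ^ 2 / 8 ≤ (1 / 4) * ∑ k ∈ Finset.univ.filter (fun k => 0 < a k + a' k),
        (a k - a' k) ^ 2 / (a k + a' k) ∧
    1 / 2 + δ ^ 2 / 8 ≤ ∑ k ∈ Finset.univ.filter (fun k => 0 < a k + a' k),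
        a k ^ 2 / (a k + a' k) := by
  set S := Finset.univ.filter (fun k => 0 < a k + a' k) with hS
  have hmem : ∀ k, k ∈ S ↔ 0 < a k + a' k := by intro k; simp [hS]
  have hzero : ∀ k, k ∉ S → a k = 0 ∧ a' k = 0 := by
    intro k hk
    rw [hmem] at hk
    have h1 : a k + a' k = 0 := le_antisymm (not_lt.1 hk) (add_nonneg (ha k) (ha' k))
    constructor <;> nlinarith [ha k, ha' k]
  have hS1 : ∑ k ∈ S, a k = 1 := by
    rw [Finset.sum_subset S.subset_univ (fun k _ hk => (hzero k hk).1), hs]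
  have hS2 : ∑ k ∈ S, a' k = 1 := by
    rw [Finset.sum_subset S.subset_univ (fun k _ hk => (hzero k hk).2), hs']
  -- identity 1
  have key : ∀ k ∈ S, (a k - a' k) ^ 2 / (a k + a' k)
      = (a k + a' k) - 4 * (a k * a' k / (a k + a' k)) := by
    intro k hk
    have h := (hmem k).1 hk
    field_simp
    ring
  have hsum1 : ∑ k ∈ S, (a k - a' k) ^ 2 / (a k + a' k)
      = 2 - 4 * ∑ k ∈ S, a k * a' k / (a k + a' k) := by
    rw [Finset.sum_congr rfl key, Finset.sum_sub_distrib, Finset.sum_add_distrib,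
      hS1, hS2, ← Finset.mul_sum]
    norm_num
  have eq1 : 1 / 2 - ∑ k ∈ S, a k * a' k / (a k + a' k)
      = (1 / 4) * ∑ k ∈ S, (a k - a' k) ^ 2 / (a k + a' k) := by
    rw [hsum1]; ring
  -- second inequality
  have haj : a j ≤ 1 := hs ▸ Finset.single_le_sum (fun k _ => ha k) (Finset.mem_univ j)
  have haj' : a' j ≤ 1 := hs' ▸ Finset.single_le_sum (fun k _ => ha' k) (Finset.mem_univ j)
  have hjS : j ∈ S := by
    rw [hmem]
    by_contra h
    have h1 : a j + a' j = 0 := le_antisymm (not_lt.1 h) (add_nonneg (ha j) (ha' j))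
    have h2 : a j = 0 := by nlinarith [ha j, ha' j]
    have h3 : a' j = 0 := by nlinarith [ha j, ha' j]
    rw [h2, h3] at hj
    simp at hj
    linarith
  have hd2 : δ ^ 2 < (a j - a' j) ^ 2 := by
    have := abs_nonneg (a j - a' j)
    nlinarith [sq_abs (a j - a' j)]
  have hsj : 0 < a j + a' j := (hmem j).1 hjS
  have hterm : δ ^ 2 / 2 ≤ (a j - a' j) ^ 2 / (a j + a' j) := by
    have h1 : δ ^ 2 / 2 ≤ δ ^ 2 / (a j + a' j) := by
      apply div_le_div_of_nonneg_left (by positivity) hsj (by linarith)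
    have h2 : δ ^ 2 / (a j + a' j) ≤ (a j - a' j) ^ 2 / (a j + a' j) := by
      gcongr
    linarith
  have hge : δ ^ 2 / 2 ≤ ∑ k ∈ S, (a k - a' k) ^ 2 / (a k + a' k) := by
    refine hterm.trans (Finset.single_le_sum (f := fun k => (a k - a' k) ^ 2 / (a k + a' k)) (fun k hk => ?_) hjS)
    have := (hmem k).1 hk
    positivity
  have ineq2 : δ ^ 2 / 8 ≤ (1 / 4) * ∑ k ∈ S, (a k - a' k) ^ 2 / (a k + a' k) := by
    linarith
  refine ⟨eq1, ineq2, ?_⟩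
  -- third
  have key2 : ∀ k ∈ S, a k ^ 2 / (a k + a' k)
      = a k - a k * a' k / (a k + a' k) := by
    intro k hk
    have h := (hmem k).1 hk
    field_simp
    ring
  have hsum2 : ∑ k ∈ S, a k ^ 2 / (a k + a' k)
      = 1 - ∑ k ∈ S, a k * a' k / (a k + a' k) := by
    rw [Finset.sum_congr rfl key2, Finset.sum_sub_distrib, hS1]
  rw [hsum2]
  linarith
end

section
/- Let Q be an m×n stochastic matrix with rank r ≥ 2. For every integer s with 2 ≤ s ≤ r and every ϱ with 1/s < ϱ ≤ ρ_s(Q), there exist an s×m stochastic matrix R and an n×s stochastic matrix S such that R·Q·S = U_s(ϱ), where ρ_s(Q) = (min{κ_s(Q),0} − 1)/(s·min{κ_s(Q),0} − 1) > 1/s and κ_s(Q) is the maximum, over s×m stochastic matrices R and n×s stochastic matrices W such that R·Q·W is invertible, of the minimum entry of (R·Q·W)^{−1}. -/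
open scoped BigOperators

/-- `U_s(ϱ)`: the `s×s` stochastic matrix with diagonal entries `ϱ` and off-diagonal
entries `(1-ϱ)/(s-1)`. -/
noncomputable def Umat (s : ℕ) (ϱ : ℝ) : Matrix (Fin s) (Fin s) ℝ :=
  Matrix.of fun i j => if i = j then ϱ else (1 - ϱ) / ((s : ℝ) - 1)


lemma isStoch_mul {α β γ : Type*} [Fintype α] [Fintype β] [Fintype γ]
    {P : Matrix α β ℝ} {W : Matrix β γ ℝ} (hP : IsStoch P) (hW : IsStoch W) :
    IsStoch (P * W) := by
  intro x
  constructor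
  · intro y
    rw [Matrix.mul_apply]
    exact Finset.sum_nonneg fun k _ => mul_nonneg ((hP x).1 k) ((hW k).1 y)
  · simp only [Matrix.mul_apply]
    rw [Finset.sum_comm]
    have h1 : ∀ k, ∑ y, W k y = 1 := fun k => (hW k).2
    simp_rw [← Finset.mul_sum, h1, mul_one]
    exact (hP x).2

/-- Let `Q` be an `m×n` stochastic matrix of rank `r ≥ 2`, and let
`2 ≤ s ≤ r`.  Let `κ_s(Q)` be the maximum, over stochastic `R` (`s×m`) and `W` (`n×s`)
with `R·Q·W` invertible, of the minimum entry of `(R·Q·W)⁻¹`, and set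
`ρ_s(Q) = (min{κ_s(Q),0} − 1)/(s·min{κ_s(Q),0} − 1)`.  Then `ρ_s(Q) > 1/s`, and for
every `1/s < ϱ ≤ ρ_s(Q)` there are stochastic matrices `R` (`s×m`) and `S` (`n×s`)
with `R·Q·S = U_s(ϱ)`. -/
theorem stmt17 {m n : ℕ} (Q : Matrix (Fin m) (Fin n) ℝ) (hQ : IsStoch Q)
    (hrank : 2 ≤ Q.rank) (s : ℕ) (hs : 2 ≤ s) (hsr : s ≤ Q.rank)
    (κ : ℝ)
    (hκ : IsGreatest {t : ℝ |
        ∃ (R : Matrix (Fin s) (Fin m) ℝ) (W : Matrix (Fin n) (Fin s) ℝ),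
          IsStoch R ∧ IsStoch W ∧ IsUnit (R * Q * W) ∧
          t = ⨅ pr : Fin s × Fin s, (R * Q * W)⁻¹ pr.1 pr.2} κ) :
    1 / (s : ℝ) < (min κ 0 - 1) / ((s : ℝ) * min κ 0 - 1) ∧
    ∀ ϱ : ℝ, 1 / (s : ℝ) < ϱ → ϱ ≤ (min κ 0 - 1) / ((s : ℝ) * min κ 0 - 1) →
      ∃ (R : Matrix (Fin s) (Fin m) ℝ) (S : Matrix (Fin n) (Fin s) ℝ),
        IsStoch R ∧ IsStoch S ∧ R * Q * S = Umat s ϱ := by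
  obtain ⟨⟨R, W, hR, hW, hUnit, hκeq⟩, -⟩ := hκ
  have hs2 : (2:ℝ) ≤ (s:ℝ) := by exact_mod_cast hs
  have hs0 : (0:ℝ) < s := by linarith
  have hs1 : (0:ℝ) < (s:ℝ) - 1 := by linarith
  have hμ0 : min κ 0 ≤ 0 := min_le_right _ _
  have hμκ : min κ 0 ≤ κ := min_le_left _ _
  have hden : (s : ℝ) * min κ 0 - 1 < 0 := by nlinarith
  constructor
  · rw [lt_div_iff_of_neg hden]
    have hfs : (1:ℝ)/(s:ℝ) * ((s:ℝ) * min κ 0 - 1) = min κ 0 - 1/(s:ℝ) := by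
      field_simp
    rw [hfs]
    have : 1/(s:ℝ) < 1 := by rw [div_lt_one hs0]; linarith
    linarith
  · intro ϱ h1 h2
    have hsϱ : 1 < (s:ℝ) * ϱ := by
      rw [div_lt_iff₀ hs0] at h1; linarith [h1]
    have hkey : ϱ - 1 ≤ min κ 0 * ((s:ℝ) * ϱ - 1) := by
      rw [le_div_iff_of_neg hden] at h2
      nlinarith
    set A := R * Q * W with hAdef
    have hAstoch : IsStoch A := isStoch_mul (isStoch_mul hR hQ) hW
    have hdet : IsUnit A.det := (Matrix.isUnit_iff_isUnit_det A).mp hUnit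
    have hAinv : A * A⁻¹ = 1 := Matrix.mul_nonsing_inv A hdet
    have hinvA : A⁻¹ * A = 1 := Matrix.nonsing_inv_mul A hdet
    have hrow : ∀ k, ∑ i, A⁻¹ k i = 1 := by
      intro k
      have h0 : ∑ i, A⁻¹ k i = ∑ j, (A⁻¹ * A) k j := by
        simp only [Matrix.mul_apply]
        rw [Finset.sum_comm]
        have h1' : ∀ i, ∑ j, A i j = 1 := fun i => (hAstoch i).2
        simp_rw [← Finset.mul_sum, h1', mul_one]
      rw [h0, hinvA]
      simp [Matrix.one_apply]
    have hκle : ∀ i j, κ ≤ A⁻¹ i j := by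
      intro i j
      rw [hκeq]
      exact ciInf_le (Finite.bddBelow_range _) (i, j)
    set d : ℝ := (1 - ϱ) / ((s:ℝ) - 1) with hd
    have hdval : ((s:ℝ) - 1) * d = 1 - ϱ := by
      rw [hd]; field_simp
    have hc : 0 < ϱ - d := by nlinarith
    have hform : ∀ k j, (A⁻¹ * Umat s ϱ) k j = d + A⁻¹ k j * (ϱ - d) := by
      intro k j
      rw [Matrix.mul_apply]
      have hpt : ∀ i, A⁻¹ k i * Umat s ϱ i j
          = A⁻¹ k i * d + (if i = j then A⁻¹ k i * (ϱ - d) else 0) := by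
        intro i
        by_cases hij : i = j <;> simp [Umat, hij, hd] <;> ring
      simp_rw [hpt]
      rw [Finset.sum_add_distrib, ← Finset.sum_mul, hrow k, one_mul,
        Finset.sum_ite_eq' Finset.univ j (fun i => A⁻¹ k i * (ϱ - d))]
      simp
    have hBstoch : IsStoch (A⁻¹ * Umat s ϱ) := by
      intro k
      constructor
      · intro j
        rw [hform k j]
        have h4 : 0 ≤ (A⁻¹ k j - min κ 0) * (ϱ - d) :=
          mul_nonneg (by linarith [hκle k j]) hc.le
        have h5 : 0 ≤ d + min κ 0 * (ϱ - d) := by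
          have h6 : ((s:ℝ) - 1) * (d + min κ 0 * (ϱ - d)) =
              (1 - ϱ) + min κ 0 * (((s:ℝ) - 1) * ϱ - (1 - ϱ)) := by
            nlinarith [hdval]
          nlinarith [hkey]
        linarith
      · simp_rw [hform k]
        rw [Finset.sum_add_distrib, Finset.sum_const, ← Finset.sum_mul, hrow k,
          one_mul, Finset.card_univ, Fintype.card_fin, nsmul_eq_mul]
        nlinarith [hdval]
    refine ⟨R, W * (A⁻¹ * Umat s ϱ), hR, isStoch_mul hW hBstoch, ?_⟩
    have hassoc : R * Q * (W * (A⁻¹ * Umat s ϱ)) = A * A⁻¹ * Umat s ϱ := by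
      simp only [hAdef, Matrix.mul_assoc]
    rw [hassoc, hAinv, Matrix.one_mul]
end
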